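/- arXiv:2601.20523 — 8 statements merged into one kernel-verified Lean document; each statement's English description precedes it below -/
import Mathlib

section
/- Let r > 0 and v > 1. A pair (μ, s) with μ > 0 and s > 0 is a fixed point of the Gamma moment-closure map, i.e. satisfies μ = e^{r} μ / (1 + rθ)^{k+1} and s = v e^{2r} (μ² + s) / (1 + 2rθ)^{k+2} − e^{2r} μ² / (1 + rθ)^{2(k+1)} with k = μ²/s and θ = s/μ, if and only if there exists z > 0 with F(z; r, v) = 0, μ = z(r − ln(1+z)) / (r ln(1+z)), and s = μ z / r. -/
/-- A pair `(μ, s)` with `μ, s > 0` is a fixed point of the Gamma moment-closure map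
iff there is `z > 0` with `F(z; r, v) = 0`, `μ = z(r − ln(1+z))/(r ln(1+z))` and
`s = μ z / r`. -/
theorem equilibrium_iff_aux_root (r v μ s : ℝ) (hr : 0 < r) (hv : 1 < v)
    (hμ : 0 < μ) (hs : 0 < s) :
    (μ = Real.exp r * μ / (1 + r * (s / μ)) ^ (μ ^ 2 / s + 1) ∧
      s = v * Real.exp (2 * r) * (μ ^ 2 + s) / (1 + 2 * r * (s / μ)) ^ (μ ^ 2 / s + 2)
          - Real.exp (2 * r) * μ ^ 2 / (1 + r * (s / μ)) ^ (2 * (μ ^ 2 / s + 1)))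
    ↔ ∃ z : ℝ, 0 < z ∧
        (r / Real.log (1 + z) + 1) * Real.log (1 + 2 * z) - 2 * r - Real.log v = 0 ∧
        μ = z * (r - Real.log (1 + z)) / (r * Real.log (1 + z)) ∧
        s = μ * z / r := by
  have hμ' : μ ≠ 0 := hμ.ne'
  have hs' : s ≠ 0 := hs.ne'
  have hr' : r ≠ 0 := hr.ne'
  have hv0 : (0:ℝ) < v := by linarith
  constructor
  · rintro ⟨h1, h2⟩
    set θ : ℝ := s / μ with hθdef
    have hθ : 0 < θ := div_pos hs hμ
    set z : ℝ := r * θ with hzdef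
    have hz : 0 < z := mul_pos hr hθ
    set k : ℝ := μ ^ 2 / s with hkdef
    have hb : (0:ℝ) < 1 + z := by linarith
    have hb2 : (0:ℝ) < 1 + 2 * z := by linarith
    have hL : 0 < Real.log (1 + z) := Real.log_pos (by linarith)
    set L := Real.log (1 + z) with hLdef
    have hL' : L ≠ 0 := hL.ne'
    have hPpos : (0:ℝ) < (1 + z) ^ (k + 1) := Real.rpow_pos_of_pos hb _
    have hP : (1 + z) ^ (k + 1) = Real.exp r := by
      field_simp at h1
      exact h1
    have hlog : (k + 1) * L = r := by
      have h := Real.log_rpow hb (k + 1)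
      rw [hP, Real.log_exp] at h
      linarith [h]
    have hμk : μ = k * θ := by
      rw [hkdef, hθdef]; field_simp
    have hμeq : μ = z * (r - L) / (r * L) := by
      rw [eq_div_iff (by positivity)]
      linear_combination (r * L) * hμk + (θ * r) * hlog - (r - L) * hzdef - θ * L * hzdef
    have hseq : s = μ * z / r := by
      have hz2 : z = r * (s / μ) := by rw [hzdef, hθdef]
      rw [eq_div_iff hr', hz2]
      field_simp
    refine ⟨z, hz, ?_, hμeq, hseq⟩
    have h2z : 1 + 2 * r * θ = 1 + 2 * z := by rw [hzdef]; ring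
    rw [h2z] at h2
    have hQ : (1 + z) ^ (2 * (k + 1)) = Real.exp (2 * r) := by
      rw [Real.rpow_def_of_pos hb]
      congr 1
      linear_combination 2 * hlog
    rw [hQ] at h2
    have hDpos : (0:ℝ) < (1 + 2 * z) ^ (k + 2) := Real.rpow_pos_of_pos hb2 _
    have hD : (1 + 2 * z) ^ (k + 2) = v * Real.exp (2 * r) := by
      field_simp at h2
      exact mul_right_cancel₀ (by positivity : μ ^ 2 + s ≠ 0) (by linear_combination h2)
    have hlog2 : (k + 2) * Real.log (1 + 2 * z) = Real.log v + 2 * r := by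
      have h := Real.log_rpow hb2 (k + 2)
      rw [hD, Real.log_mul hv0.ne' (Real.exp_ne_zero _), Real.log_exp] at h
      linarith
    have hrL : r / L = k + 1 := by
      rw [div_eq_iff hL']; linarith
    rw [hrL]
    linarith
  · rintro ⟨z, hz, hF, hμeq, hseq⟩
    have hb : (0:ℝ) < 1 + z := by linarith
    have hb2 : (0:ℝ) < 1 + 2 * z := by linarith
    have hL : 0 < Real.log (1 + z) := Real.log_pos (by linarith)
    set L := Real.log (1 + z) with hLdef
    have hL' : L ≠ 0 := hL.ne'
    have hz' : z ≠ 0 := hz.ne'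
    have hsm : r * (s / μ) = z := by rw [hseq]; field_simp
    have hsm2 : 2 * r * (s / μ) = 2 * z := by rw [hseq]; field_simp
    have hA : μ ^ 2 / s = μ * r / z := by rw [hseq]; field_simp
    have hB : μ * r / z = (r - L) / L := by
      rw [hμeq, div_eq_div_iff hz' hL']
      field_simp
    have hk1 : μ ^ 2 / s + 1 = r / L := by
      rw [hA, hB, div_add' _ _ _ hL']
      congr 1
      ring
    have hk2 : μ ^ 2 / s + 2 = r / L + 1 := by linarith
    have hk3 : 2 * (μ ^ 2 / s + 1) = 2 * (r / L) := by linarith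
    have hE1 : (1 + z) ^ (r / L) = Real.exp r := by
      rw [Real.rpow_def_of_pos hb]
      congr 1
      field_simp
      exact hLdef.symm
    have hE2 : (1 + z) ^ (2 * (r / L)) = Real.exp (2 * r) := by
      rw [Real.rpow_def_of_pos hb]
      congr 1
      field_simp
      exact hLdef.symm
    have hE3 : (1 + 2 * z) ^ (r / L + 1) = Real.exp (2 * r) * v := by
      rw [Real.rpow_def_of_pos hb2]
      have h : Real.log (1 + 2 * z) * (r / L + 1) = 2 * r + Real.log v := by
        linarith [hF]
      rw [h, Real.exp_add, Real.exp_log hv0]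
    constructor
    · rw [hsm, hk1, hE1]
      field_simp
    · rw [hsm, hsm2, hk2, hk3, hE2, hE3]
      field_simp
      ring
end

section
/- Let r > 0 and v > 1 satisfy v < (2 − e^{-r})². Then there exists z* with 0 < z* < e^{r} − 1 such that F(z*; r, v) = 0; in particular r − ln(1+z*) > 0, so that μ* = z*(r − ln(1+z*)) / (r ln(1+z*)) > 0 and s* = μ* z* / r > 0, and (μ*, s*) is a feasible positive equilibrium of the Gamma moment-closure map. -/
private lemma exists_root (r v : ℝ) (hr : 0 < r) (hv : 1 < v)
    (hcond : v < (2 - Real.exp (-r)) ^ 2) :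
    ∃ z : ℝ, 0 < z ∧ z < Real.exp r - 1 ∧
      (r / Real.log (1 + z) + 1) * Real.log (1 + 2 * z) - 2 * r - Real.log v = 0 := by
  set f : ℝ → ℝ := fun z =>
    (r / Real.log (1 + z) + 1) * Real.log (1 + 2 * z) - 2 * r - Real.log v with hf
  have hlv : 0 < Real.log v := Real.log_pos hv
  have hexp : 1 < Real.exp r := by
    have := Real.exp_lt_exp.mpr hr; simpa using this
  set a : ℝ := min (Real.log v / (4 * (r + 1))) ((Real.exp r - 1) / 2) with hadef
  set b : ℝ := Real.exp r - 1 with hbdef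
  have hb0 : 0 < b := by simp [hbdef]; linarith
  have ha0 : 0 < a := by
    apply lt_min
    · positivity
    · linarith
  have hab : a < b := by
    have := min_le_right (Real.log v / (4 * (r + 1))) ((Real.exp r - 1) / 2)
    have : a ≤ (Real.exp r - 1) / 2 := this
    linarith
  -- continuity
  have hcont : ContinuousOn f (Set.Icc a b) := by
    have hlog1 : ContinuousOn (fun z : ℝ => Real.log (1 + z)) (Set.Icc a b) := by
      apply Real.continuousOn_log.comp (by fun_prop)
      intro x hx
      have : 0 < x := lt_of_lt_of_le ha0 hx.1
      simp only [Set.mem_compl_iff, Set.mem_singleton_iff]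
      intro h; linarith
    have hlog2 : ContinuousOn (fun z : ℝ => Real.log (1 + 2 * z)) (Set.Icc a b) := by
      apply Real.continuousOn_log.comp (by fun_prop)
      intro x hx
      have : 0 < x := lt_of_lt_of_le ha0 hx.1
      simp only [Set.mem_compl_iff, Set.mem_singleton_iff]
      intro h; linarith
    apply ContinuousOn.sub
    apply ContinuousOn.sub
    apply ContinuousOn.mul
    · apply ContinuousOn.add _ continuousOn_const
      apply ContinuousOn.div continuousOn_const hlog1
      intro x hx
      have hx0 : 0 < x := lt_of_lt_of_le ha0 hx.1
      exact ne_of_gt (Real.log_pos (by linarith))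
    · exact hlog2
    · exact continuousOn_const
    · exact continuousOn_const
  -- f a < 0
  have hfa : f a < 0 := by
    have hLa : 0 < Real.log (1 + a) := Real.log_pos (by linarith)
    have hMa : Real.log (1 + 2 * a) ≤ 2 * a := by
      have := Real.log_le_sub_one_of_pos (show (0:ℝ) < 1 + 2 * a by linarith)
      linarith
    have hMa0 : 0 ≤ Real.log (1 + 2 * a) := le_of_lt (Real.log_pos (by linarith))
    have hLlb : a / (1 + a) ≤ Real.log (1 + a) := by
      have h1 : Real.log (1 / (1 + a)) ≤ 1 / (1 + a) - 1 :=
        Real.log_le_sub_one_of_pos (by positivity)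
      rw [Real.log_div one_ne_zero (by positivity), Real.log_one] at h1
      have h2 : 1 - 1 / (1 + a) = a / (1 + a) := by field_simp; ring
      linarith
    have hdiv : r / Real.log (1 + a) ≤ r * (1 + a) / a := by
      have h0 : 0 < a / (1 + a) := by positivity
      have := div_le_div_of_nonneg_left (le_of_lt hr) h0 hLlb
      calc r / Real.log (1 + a) ≤ r / (a / (1 + a)) :=
            div_le_div_of_nonneg_left (le_of_lt hr) h0 hLlb
        _ = r * (1 + a) / a := by field_simp
    have hmul : (r / Real.log (1 + a) + 1) * Real.log (1 + 2 * a)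
        ≤ (r * (1 + a) / a + 1) * (2 * a) := by
      apply mul_le_mul (by linarith) hMa hMa0
      positivity
    have heq : (r * (1 + a) / a + 1) * (2 * a) = 2 * r * (1 + a) + 2 * a := by
      field_simp
    have hasmall : a ≤ Real.log v / (4 * (r + 1)) := min_le_left _ _
    have h2a : 2 * a * (r + 1) ≤ Real.log v / 2 := by
      have h4 : 0 < 4 * (r + 1) := by linarith
      rw [le_div_iff₀ h4] at hasmall
      nlinarith
    have : f a ≤ 2 * a * (r + 1) - Real.log v := by
      simp only [hf]
      nlinarith [hmul, heq]
    linarith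
  -- f b > 0
  have hfb : 0 < f b := by
    have h1b : (1 : ℝ) + b = Real.exp r := by simp [hbdef]
    have h2b : (1 : ℝ) + 2 * b = 2 * Real.exp r - 1 := by simp [hbdef]; ring
    have hLb : Real.log (1 + b) = r := by rw [h1b, Real.log_exp]
    have hpos : (0:ℝ) < 2 - Real.exp (-r) := by
      have : Real.exp (-r) < 1 := Real.exp_lt_one_iff.mpr (by linarith)
      linarith
    have hlogv : Real.log v < Real.log ((2 - Real.exp (-r)) ^ 2) :=
      Real.log_lt_log (by linarith) hcond
    have hsq : Real.log ((2 - Real.exp (-r)) ^ 2) = 2 * Real.log (2 - Real.exp (-r)) := by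
      rw [Real.log_pow]; push_cast; ring
    have hfact : 2 - Real.exp (-r) = (2 * Real.exp r - 1) / Real.exp r := by
      rw [Real.exp_neg]; field_simp
    have hlog2r : Real.log (2 - Real.exp (-r)) = Real.log (2 * Real.exp r - 1) - r := by
      rw [hfact, Real.log_div (by nlinarith) (ne_of_gt (Real.exp_pos r)), Real.log_exp]
    have : f b = 2 * Real.log (2 * Real.exp r - 1) - 2 * r - Real.log v := by
      simp only [hf, hLb, h2b]
      rw [div_self hr.ne']
      ring
    rw [this]
    rw [hsq, hlog2r] at hlogv
    linarith
  have := intermediate_value_Ioo (le_of_lt hab) hcont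
  have h0 : (0:ℝ) ∈ Set.Ioo (f a) (f b) := ⟨hfa, hfb⟩
  obtain ⟨z, hz, hfz⟩ := this h0
  exact ⟨z, lt_trans ha0 hz.1, hz.2, hfz⟩

/-- If `v < (2 − e^{-r})²`, there is `z*` with `0 < z* < eʳ − 1` and `F(z*; r, v) = 0`;
then `r − ln(1+z*) > 0`, the corresponding `μ* > 0` and `s* > 0`, and `(μ*, s*)` is a
feasible positive equilibrium (fixed point) of the Gamma moment-closure map. -/
theorem feasible_equilibrium_exists (r v : ℝ) (hr : 0 < r) (hv : 1 < v)
    (hcond : v < (2 - Real.exp (-r)) ^ 2) :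
    ∃ z μ s : ℝ, 0 < z ∧ z < Real.exp r - 1 ∧
      (r / Real.log (1 + z) + 1) * Real.log (1 + 2 * z) - 2 * r - Real.log v = 0 ∧
      0 < r - Real.log (1 + z) ∧
      μ = z * (r - Real.log (1 + z)) / (r * Real.log (1 + z)) ∧
      s = μ * z / r ∧
      0 < μ ∧ 0 < s ∧
      μ = Real.exp r * μ / (1 + r * (s / μ)) ^ (μ ^ 2 / s + 1) ∧
      s = v * Real.exp (2 * r) * (μ ^ 2 + s) / (1 + 2 * r * (s / μ)) ^ (μ ^ 2 / s + 2)
          - Real.exp (2 * r) * μ ^ 2 / (1 + r * (s / μ)) ^ (2 * (μ ^ 2 / s + 1)) := by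
  obtain ⟨z, hz0, hzb, hFz⟩ := exists_root r v hr hv hcond
  set L := Real.log (1 + z) with hL
  have hL0 : 0 < L := Real.log_pos (by linarith)
  have hLr : L < r := by
    have : (1 : ℝ) + z < Real.exp r := by linarith
    have := Real.log_lt_log (by linarith) this
    simpa [Real.log_exp] using this
  set μ := z * (r - L) / (r * L) with hμ
  set s := μ * z / r with hs
  have hμ0 : 0 < μ := by
    apply div_pos (by nlinarith) (by positivity)
  have hs0 : 0 < s := by
    apply div_pos (by positivity) hr
  refine ⟨z, μ, s, hz0, hzb, hFz, by linarith, rfl, rfl, hμ0, hs0, ?_, ?_⟩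
  · -- first moment equation
    have hsμ : s / μ = z / r := by
      rw [hs]; field_simp
    have hk : μ ^ 2 / s + 1 = r / L := by
      have h1 : μ ^ 2 / s = μ * r / z := by
        rw [hs]; field_simp
      rw [h1, hμ]
      field_simp
      ring
    have hbase : 1 + r * (s / μ) = 1 + z := by
      rw [hsμ]; field_simp
    rw [hbase, hk]
    rw [Real.rpow_def_of_pos (by linarith)]
    rw [← hL]
    rw [mul_div_cancel₀ r (ne_of_gt hL0)]
    field_simp [Real.exp_ne_zero]
  · -- second moment equation
    have hsμ : s / μ = z / r := by
      rw [hs]; field_simp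
    have hk : μ ^ 2 / s + 1 = r / L := by
      have h1 : μ ^ 2 / s = μ * r / z := by
        rw [hs]; field_simp
      rw [h1, hμ]
      field_simp
      ring
    have hk2 : μ ^ 2 / s + 2 = r / L + 1 := by linarith
    have hbase1 : 1 + r * (s / μ) = 1 + z := by
      rw [hsμ]; field_simp
    have hbase2 : 1 + 2 * r * (s / μ) = 1 + 2 * z := by
      rw [hsμ]; field_simp
    have hp1 : (1 + z) ^ (2 * (μ ^ 2 / s + 1)) = Real.exp (2 * r) := by
      rw [hk, Real.rpow_def_of_pos (by linarith), ← hL]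
      congr 1
      field_simp
    have hp2 : (1 + 2 * z) ^ (μ ^ 2 / s + 2) = Real.exp (2 * r) * v := by
      rw [hk2, Real.rpow_def_of_pos (by linarith)]
      have hM : Real.log (1 + 2 * z) * (r / L + 1) = 2 * r + Real.log v := by
        linear_combination hFz
      rw [hM, Real.exp_add, Real.exp_log (by linarith)]
    rw [hbase1, hbase2, hp1, hp2]
    have hv0 : (0:ℝ) < v := by linarith
    have he : (0:ℝ) < Real.exp (2 * r) := Real.exp_pos _
    field_simp
    ring
end

section
/- For every r > 0 and v > 1, the equation F(z; r, v) = 0 has exactly one solution z > 0; that is, there exists a unique z* > 0 with F(z*; r, v) = 0. -/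
open Real Set Filter Topology


lemma lemA {a b : ℝ} (ha : 1 ≤ a) (hab : a ≤ b) :
    (Real.log b + 1) * a ≤ (Real.log a + 1) * b := by
  have ha0 : 0 < a := by linarith
  have hb0 : 0 < b := by linarith
  have h1 : Real.log (b / a) ≤ b / a - 1 := Real.log_le_sub_one_of_pos (by positivity)
  rw [Real.log_div (by linarith) (by linarith)] at h1
  have h2 : Real.log b ≤ Real.log a + (b - a) / a := by
    have h3 : b / a - 1 = (b - a) / a := by field_simp
    linarith [h3 ▸ h1]
  have h3 : (Real.log b) * a ≤ Real.log a * a + (b - a) := by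
    have h4 := mul_le_mul_of_nonneg_right h2 ha0.le
    have hd : ((b - a) / a) * a = b - a := by field_simp
    nlinarith [h4]
  have hla : 0 ≤ Real.log a := Real.log_nonneg ha
  nlinarith [mul_nonneg hla (by linarith : (0:ℝ) ≤ b - a)]

lemma hasDerivL1 {z : ℝ} (hz : (0:ℝ) < 1 + z) :
    HasDerivAt (fun z : ℝ => Real.log (1 + z)) (1 / (1 + z)) z := by
  have h : HasDerivAt (fun z : ℝ => 1 + z) 1 z := (hasDerivAt_id z).const_add 1
  simpa using h.log hz.ne'

lemma hasDerivL2 {z : ℝ} (hz : (0:ℝ) < 1 + 2 * z) :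
    HasDerivAt (fun z : ℝ => Real.log (1 + 2 * z)) (2 / (1 + 2 * z)) z := by
  have h : HasDerivAt (fun z : ℝ => 1 + 2 * z) 2 z := by
    simpa using ((hasDerivAt_id z).const_mul 2).const_add 1
  simpa using h.log hz.ne'

lemma hasDerivQ {z : ℝ} (h1 : (0:ℝ) < 1 + z) (h2 : (0:ℝ) < 1 + 2*z) :
    HasDerivAt (fun z : ℝ => 2 * ((Real.log (1 + z))^2 + 2 * Real.log (1 + z))
      - ((Real.log (1 + 2*z))^2 + 2 * Real.log (1 + 2*z)))
      (2 * (2 * Real.log (1 + z) ^ 1 * (1/(1+z)) + 2 * (1/(1+z)))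
        - (2 * Real.log (1 + 2*z) ^ 1 * (2/(1+2*z)) + 2 * (2/(1+2*z)))) z := by
  have d1 := hasDerivL1 h1
  have d2 := hasDerivL2 h2
  have := (((d1.pow 2).add (d1.const_mul 2)).const_mul 2).sub
    ((d2.pow 2).add (d2.const_mul 2))
  refine this.congr_deriv ?_
  norm_num

lemma lemQ {z : ℝ} (hz : 0 ≤ z) :
    (Real.log (1 + 2*z))^2 + 2 * Real.log (1 + 2*z)
      ≤ 2 * ((Real.log (1 + z))^2 + 2 * Real.log (1 + z)) := by
  set f : ℝ → ℝ := fun z => 2 * ((Real.log (1 + z))^2 + 2 * Real.log (1 + z))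
      - ((Real.log (1 + 2*z))^2 + 2 * Real.log (1 + 2*z)) with hf
  have hd : ∀ x : ℝ, 0 ≤ x → HasDerivAt f
      (2 * (2 * Real.log (1 + x) ^ 1 * (1/(1+x)) + 2 * (1/(1+x)))
        - (2 * Real.log (1 + 2*x) ^ 1 * (2/(1+2*x)) + 2 * (2/(1+2*x)))) x :=
    fun x hx => hasDerivQ (by linarith) (by linarith)
  have hmono : MonotoneOn f (Ici 0) := by
    apply monotoneOn_of_deriv_nonneg (convex_Ici 0)
    · exact fun x hx => ((hd x hx).continuousAt).continuousWithinAt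
    · intro x hx
      rw [interior_Ici] at hx
      exact ((hd x (le_of_lt (mem_Ioi.mp hx))).differentiableAt).differentiableWithinAt
    · intro x hx
      rw [interior_Ici] at hx
      have hx0 : 0 < x := mem_Ioi.mp hx
      rw [(hd x hx0.le).deriv]
      have h1 : (0:ℝ) < 1 + x := by linarith
      have h2 : (0:ℝ) < 1 + 2*x := by linarith
      have hA := lemA (a := 1 + x) (b := 1 + 2*x) (by linarith) (by linarith)
      have e1 : 2 * (2 * Real.log (1 + x) ^ 1 * (1/(1+x)) + 2 * (1/(1+x)))
        - (2 * Real.log (1 + 2*x) ^ 1 * (2/(1+2*x)) + 2 * (2/(1+2*x)))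
        = 4 * ((Real.log (1+x) + 1) / (1+x) - (Real.log (1+2*x) + 1) / (1+2*x)) := by
        ring
      rw [e1]
      have : (Real.log (1+2*x) + 1) / (1+2*x) ≤ (Real.log (1+x) + 1) / (1+x) := by
        rw [div_le_div_iff₀ h2 h1]
        linarith [hA]
      linarith
  have h0 : f 0 ≤ f z := hmono (self_mem_Ici) hz hz
  have hf0 : f 0 = 0 := by norm_num [hf]
  rw [hf0] at h0
  simp only [hf] at h0
  linarith

lemma lemW {z : ℝ} (hz : 0 ≤ z) :
    (1 + 2*z) * (Real.log (1 + 2*z))^2 ≤ 4 * (1 + z) * (Real.log (1 + z))^2 := by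
  set f : ℝ → ℝ := fun z => 4 * (1 + z) * (Real.log (1 + z))^2
      - (1 + 2*z) * (Real.log (1 + 2*z))^2 with hf
  have hd : ∀ x : ℝ, 0 ≤ x → HasDerivAt f
      (4 * ((Real.log (1+x))^2 + 2 * Real.log (1+x))
        - (2 * (Real.log (1+2*x))^2 + 4 * Real.log (1+2*x))) x := by
    intro x hx
    have h1 : (0:ℝ) < 1 + x := by linarith
    have h2 : (0:ℝ) < 1 + 2*x := by linarith
    have d1 := hasDerivL1 h1
    have d2 := hasDerivL2 h2
    have dz1 : HasDerivAt (fun z : ℝ => 1 + z) 1 x := (hasDerivAt_id x).const_add 1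
    have dz2 : HasDerivAt (fun z : ℝ => 1 + 2*z) 2 x := by
      simpa using ((hasDerivAt_id x).const_mul 2).const_add 1
    have h := ((dz1.mul (d1.pow 2)).const_mul 4).sub (dz2.mul (d2.pow 2))
    rw [hf]
    refine (h.congr_of_eventuallyEq (Filter.Eventually.of_forall fun z => ?_)).congr_deriv ?_
    · simp only [Pi.sub_apply, Pi.mul_apply, Pi.pow_apply]
      ring
    simp only [Pi.pow_apply]
    norm_num
    field_simp
    ring
  have hmono : MonotoneOn f (Ici 0) := by
    apply monotoneOn_of_deriv_nonneg (convex_Ici 0)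
    · exact fun x hx => ((hd x hx).continuousAt).continuousWithinAt
    · intro x hx
      rw [interior_Ici] at hx
      exact ((hd x (le_of_lt (mem_Ioi.mp hx))).differentiableAt).differentiableWithinAt
    · intro x hx
      rw [interior_Ici] at hx
      have hx0 : 0 < x := mem_Ioi.mp hx
      rw [(hd x hx0.le).deriv]
      have hQ := lemQ hx0.le
      linarith
  have h0 : f 0 ≤ f z := hmono (self_mem_Ici) hz hz
  have hf0 : f 0 = 0 := by norm_num [hf]
  rw [hf0] at h0
  simp only [hf] at h0
  linarith

lemma hasDerivG (r C : ℝ) {z : ℝ} (h1 : (0:ℝ) < 1 + z) (h2 : (0:ℝ) < 1 + 2*z) :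
    HasDerivAt (fun z : ℝ => (r + Real.log (1+z)) * Real.log (1+2*z) - C * Real.log (1+z))
      ((1/(1+z)) * Real.log (1+2*z) + (r + Real.log (1+z)) * (2/(1+2*z)) - C * (1/(1+z))) z := by
  have d1 := hasDerivL1 h1
  have d2 := hasDerivL2 h2
  exact ((d1.const_add r).mul d2).sub (d1.const_mul C)

lemma root_deriv_pos (r w : ℝ) (hr : 0 < r) (hw : 0 < w) {z : ℝ} (hz : 0 < z)
    (hroot : (r + Real.log (1+z)) * Real.log (1+2*z) - (2*r+w) * Real.log (1+z) = 0) :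
    0 < (1/(1+z)) * Real.log (1+2*z) + (r + Real.log (1+z)) * (2/(1+2*z))
        - (2*r+w) * (1/(1+z)) := by
  have h1 : (0:ℝ) < 1 + z := by linarith
  have h2 : (0:ℝ) < 1 + 2*z := by linarith
  set L1 := Real.log (1+z) with hL1def
  set L2 := Real.log (1+2*z) with hL2def
  have hL1 : 0 < L1 := Real.log_pos (by linarith)
  have hL2 : 0 < L2 := Real.log_pos (by linarith)
  have hL12 : L1 < L2 := Real.log_lt_log h1 (by linarith)
  have h2L : L2 < 2 * L1 := by
    have hsq : Real.log ((1+z)^2) = 2 * Real.log (1+z) := by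
      rw [Real.log_pow]; push_cast; ring
    have : L2 < Real.log ((1+z)^2) := Real.log_lt_log h2 (by nlinarith)
    rw [hsq] at this
    exact this
  have hre : r * (2*L1 - L2) = L1 * (L2 - w) := by linear_combination -hroot
  set X := L2 * (1+2*z) - 2 * L1 * (1+z) with hXdef
  have key : (r + L1) * X < L1 * L2 * (1+2*z) := by
    rcases le_or_gt X 0 with hX | hX
    · have hrL : 0 < r + L1 := by linarith
      have : (r + L1) * X ≤ 0 := mul_nonpos_of_nonneg_of_nonpos hrL.le hX
      nlinarith [mul_pos (mul_pos hL1 hL2) h2]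
    · have hA : (r + L1) * (2*L1 - L2) < 2 * L1^2 := by nlinarith [mul_pos hL1 hw]
      have hW := lemW hz.le
      have hB : 2 * L1^2 * X ≤ L1 * L2 * (1+2*z) * (2*L1 - L2) := by
        nlinarith [mul_le_mul_of_nonneg_left hW hL1.le]
      have h4 : ((r + L1) * X) * (2*L1 - L2) < (L1 * L2 * (1+2*z)) * (2*L1 - L2) := by
        calc ((r + L1) * X) * (2*L1 - L2) = (r + L1) * (2*L1 - L2) * X := by ring
          _ < 2 * L1^2 * X := mul_lt_mul_of_pos_right hA hX
          _ ≤ (L1 * L2 * (1+2*z)) * (2*L1 - L2) := hB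
      exact lt_of_mul_lt_mul_right h4 (by linarith)
  -- from hroot : (2r+w) * L1 = (r+L1) * L2
  have hC : (2*r+w) * L1 = (r + L1) * L2 := by linear_combination -hroot
  have hE : 0 < L2 * (1+2*z) + 2 * (r + L1) * (1+z) - (2*r+w) * (1+2*z) := by
    have hEL : 0 < (L2 * (1+2*z) + 2 * (r + L1) * (1+z) - (2*r+w) * (1+2*z)) * L1 := by
      have expand : (L2 * (1+2*z) + 2 * (r + L1) * (1+z) - (2*r+w) * (1+2*z)) * L1
          = L1 * L2 * (1+2*z) - (r + L1) * X := by
        rw [hXdef]; linear_combination (-(1+2*z)) * hC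
      rw [expand]; linarith
    nlinarith [hEL, hL1]
  have heq : (1/(1+z)) * L2 + (r + L1) * (2/(1+2*z)) - (2*r+w) * (1/(1+z))
      = (L2 * (1+2*z) + 2 * (r + L1) * (1+z) - (2*r+w) * (1+2*z)) / ((1+z)*(1+2*z)) := by
    field_simp
  rw [heq]
  exact div_pos hE (by positivity)

lemma no_two_roots (r w : ℝ) (hr : 0 < r) (hw : 0 < w) {a b : ℝ} (ha : 0 < a) (hab : a < b)
    (hGa : (r + Real.log (1+a)) * Real.log (1+2*a) - (2*r+w) * Real.log (1+a) = 0)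
    (hGb : (r + Real.log (1+b)) * Real.log (1+2*b) - (2*r+w) * Real.log (1+b) = 0) :
    False := by
  set G : ℝ → ℝ := fun z => (r + Real.log (1+z)) * Real.log (1+2*z) - (2*r+w) * Real.log (1+z)
    with hGdef
  have hb : 0 < b := ha.trans hab
  have hda := hasDerivG r (2*r+w) (by linarith : (0:ℝ) < 1+a) (by linarith : (0:ℝ) < 1+2*a)
  have hdb := hasDerivG r (2*r+w) (by linarith : (0:ℝ) < 1+b) (by linarith : (0:ℝ) < 1+2*b)
  have hpa := root_deriv_pos r w hr hw ha hGa
  have hpb := root_deriv_pos r w hr hw hb hGb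
  -- G x > 0 for some x ∈ (a,b)
  have hslope_a : Tendsto (slope G a) (𝓝[>] a) (𝓝 ((1/(1+a)) * Real.log (1+2*a)
      + (r + Real.log (1+a)) * (2/(1+2*a)) - (2*r+w) * (1/(1+a)))) :=
    (hasDerivAt_iff_tendsto_slope.mp hda).mono_left
      (nhdsWithin_mono a (fun x hx => ne_of_gt hx))
  have hev1 : ∀ᶠ x in 𝓝[>] a, 0 < slope G a x := hslope_a.eventually (eventually_gt_nhds hpa)
  have hev2 : ∀ᶠ x in 𝓝[>] a, x ∈ Ioo a b := Ioo_mem_nhdsGT_of_mem ⟨le_refl a, hab⟩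
  obtain ⟨x, hsx, hx⟩ := (hev1.and hev2).exists
  have hGa' : G a = 0 := hGa
  have hGx : 0 < G x := by
    rw [slope_def_field] at hsx
    rcases div_pos_iff.mp hsx with ⟨hnum, _⟩ | ⟨_, hden⟩
    · linarith [hGa' ▸ hnum]
    · have : a < x := hx.1
      linarith
  -- G y < 0 for some y ∈ (x,b)
  have hslope_b : Tendsto (slope G b) (𝓝[<] b) (𝓝 ((1/(1+b)) * Real.log (1+2*b)
      + (r + Real.log (1+b)) * (2/(1+2*b)) - (2*r+w) * (1/(1+b)))) :=
    (hasDerivAt_iff_tendsto_slope.mp hdb).mono_left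
      (nhdsWithin_mono b (fun y hy => ne_of_lt hy))
  have hev3 : ∀ᶠ y in 𝓝[<] b, 0 < slope G b y := hslope_b.eventually (eventually_gt_nhds hpb)
  have hev4 : ∀ᶠ y in 𝓝[<] b, y ∈ Ioo x b := Ioo_mem_nhdsLT_of_mem ⟨hx.2, le_refl b⟩
  obtain ⟨y, hsy, hy⟩ := (hev3.and hev4).exists
  have hGb' : G b = 0 := hGb
  have hGy : G y < 0 := by
    rw [slope_def_field] at hsy
    rcases div_pos_iff.mp hsy with ⟨_, hden⟩ | ⟨hnum, _⟩
    · have : y < b := hy.2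
      linarith
    · linarith [hGb' ▸ hnum]
  have hxy : x < y := hy.1
  have hx0 : 0 < x := ha.trans hx.1
  have hcont : ContinuousOn G (Icc x y) := by
    intro t ht
    have ht0 : 0 < t := lt_of_lt_of_le hx0 ht.1
    exact (hasDerivG r (2*r+w) (by linarith) (by linarith)).continuousAt.continuousWithinAt
  set S : Set ℝ := Icc x y ∩ G ⁻¹' {0} with hSdef
  have hSclosed : IsClosed S :=
    hcont.preimage_isClosed_of_isClosed isClosed_Icc isClosed_singleton
  have hSne : S.Nonempty := by
    have h0mem : (0:ℝ) ∈ Icc (G y) (G x) := ⟨hGy.le, hGx.le⟩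
    obtain ⟨c, hc, hc0⟩ := intermediate_value_Icc' hxy.le hcont h0mem
    exact ⟨c, hc, by simpa using hc0⟩
  have hSbdd : BddBelow S := (bddBelow_Icc).mono (inter_subset_left)
  set c := sInf S with hcdef
  have hcS : c ∈ S := hSclosed.csInf_mem hSne hSbdd
  have hGc : G c = 0 := by simpa using hcS.2
  have hxc : x < c := by
    rcases lt_or_eq_of_le hcS.1.1 with h | h
    · exact h
    · exfalso; rw [← h] at hGc; linarith
  have hc0 : 0 < c := hx0.trans hxc
  have hcy : c ≤ y := hcS.1.2
  have hpos : ∀ t, t ∈ Ico x c → 0 < G t := by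
    intro t ht
    rcases lt_trichotomy (G t) 0 with hlt | heq | hgt
    · exfalso
      have htc : t < c := ht.2
      have hty : t ≤ y := le_trans htc.le hcy
      have hcont' : ContinuousOn G (Icc x t) := hcont.mono (Icc_subset_Icc_right hty)
      have h0mem : (0:ℝ) ∈ Icc (G t) (G x) := ⟨hlt.le, hGx.le⟩
      obtain ⟨u, hu, hu0⟩ := intermediate_value_Icc' ht.1 hcont' h0mem
      have huS : u ∈ S := ⟨⟨hu.1, le_trans hu.2 hty⟩, by simpa using hu0⟩
      have hcu := csInf_le hSbdd huS
      rw [← hcdef] at hcu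
      linarith [hu.2]
    · exfalso
      have htS : t ∈ S := ⟨⟨ht.1, le_trans ht.2.le hcy⟩, by simpa using heq⟩
      have hct := csInf_le hSbdd htS
      rw [← hcdef] at hct
      linarith [ht.2]
    · exact hgt
  have hGc_root : (r + Real.log (1+c)) * Real.log (1+2*c)
      - (2*r+w) * Real.log (1+c) = 0 := hGc
  have hdc := hasDerivG r (2*r+w) (show (0:ℝ) < 1+c by linarith)
    (show (0:ℝ) < 1+2*c by linarith)
  have hpc := root_deriv_pos r w hr hw hc0 hGc_root
  have hslope_c : Tendsto (slope G c) (𝓝[<] c) (𝓝 ((1/(1+c)) * Real.log (1+2*c)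
      + (r + Real.log (1+c)) * (2/(1+2*c)) - (2*r+w) * (1/(1+c)))) :=
    (hasDerivAt_iff_tendsto_slope.mp hdc).mono_left
      (nhdsWithin_mono c (fun t htc => ne_of_lt htc))
  have hev5 : ∀ᶠ t in 𝓝[<] c, t ∈ Ico x c := Ico_mem_nhdsLT_of_mem ⟨hxc, le_refl c⟩
  have hev6 : ∀ᶠ t in 𝓝[<] c, slope G c t ≤ 0 := by
    filter_upwards [hev5] with t ht
    rw [slope_def_field]
    apply div_nonpos_iff.mpr
    left
    constructor
    · rw [hGc]; linarith [hpos t ht]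
    · linarith [ht.2]
  have hle := le_of_tendsto hslope_c hev6
  linarith [hpc]

/-- For every `r > 0` and `v > 1`, the equation `F(z; r, v) = 0` has exactly one
positive solution. -/
theorem F_root_unique (r v : ℝ) (hr : 0 < r) (hv : 1 < v) :
    ∃! z : ℝ, 0 < z ∧
      (r / Real.log (1 + z) + 1) * Real.log (1 + 2 * z) - 2 * r - Real.log v = 0 := by
  set w := Real.log v with hwdef
  have hw : 0 < w := Real.log_pos hv
  set G : ℝ → ℝ := fun z => (r + Real.log (1+z)) * Real.log (1+2*z) - (2*r+w) * Real.log (1+z)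
    with hGdef
  -- equivalence of the two formulations for z > 0
  have hFG : ∀ z : ℝ, 0 < z →
      ((r / Real.log (1 + z) + 1) * Real.log (1 + 2 * z) - 2 * r - Real.log v = 0 ↔
        G z = 0) := by
    intro z hz
    have hL : Real.log (1+z) ≠ 0 := (Real.log_pos (by linarith)).ne'
    simp only [hGdef]
    rw [hwdef]
    constructor
    · intro h
      field_simp at h
      ring_nf at h ⊢
      linear_combination h
    · intro h
      field_simp
      ring_nf at h ⊢
      linear_combination h
  -- existence of a negative value just right of 0
  have hd0 := hasDerivG r (2*r+w) (show (0:ℝ) < 1+0 by norm_num)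
    (show (0:ℝ) < 1+2*0 by norm_num)
  have hD0 : (1/(1+(0:ℝ))) * Real.log (1+2*0) + (r + Real.log (1+(0:ℝ))) * (2/(1+2*0))
      - (2*r+w) * (1/(1+(0:ℝ))) = -w := by
    norm_num
    ring
  rw [hD0] at hd0
  have hslope0 : Tendsto (slope G 0) (𝓝[>] (0:ℝ)) (𝓝 (-w)) :=
    (hasDerivAt_iff_tendsto_slope.mp hd0).mono_left
      (nhdsWithin_mono 0 (fun x hx => ne_of_gt hx))
  have hev1 : ∀ᶠ x in 𝓝[>] (0:ℝ), slope G 0 x < 0 :=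
    hslope0.eventually (eventually_lt_nhds (by linarith : -w < 0))
  have hev2 : ∀ᶠ x in 𝓝[>] (0:ℝ), x ∈ Ioo (0:ℝ) 1 :=
    Ioo_mem_nhdsGT_of_mem ⟨le_refl 0, one_pos⟩
  obtain ⟨x, hsx, hx⟩ := (hev1.and hev2).exists
  have hG0 : G 0 = 0 := by simp [hGdef]
  have hGx : G x < 0 := by
    rw [slope_def_field, hG0] at hsx
    rcases div_neg_iff.mp hsx with ⟨_, hden⟩ | ⟨hnum, _⟩
    · linarith [hx.1]
    · linarith
  -- a positive value far to the right
  set zb := max (x+1) (Real.exp (2*r+w)) with hzbdef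
  have hxzb : x < zb := lt_of_lt_of_le (by linarith) (le_max_left _ _)
  have hzb0 : 0 < zb := lt_trans hx.1 hxzb
  have hGzb : 0 < G zb := by
    have hL1b : 2*r+w < Real.log (1+zb) := by
      have h1 : Real.exp (2*r+w) ≤ zb := le_max_right _ _
      have := Real.log_lt_log (Real.exp_pos (2*r+w)) (by linarith : Real.exp (2*r+w) < 1+zb)
      rwa [Real.log_exp] at this
    have hL2b : Real.log (1+zb) ≤ Real.log (1+2*zb) :=
      Real.log_le_log (by linarith) (by linarith)
    have hL1bpos : 0 < Real.log (1+zb) := by linarith [hw, hr]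
    simp only [hGdef]
    nlinarith [hL1bpos, hL2b, hL1b]
  -- IVT
  have hcont : ContinuousOn G (Icc x zb) := by
    intro t ht
    have ht0 : 0 < t := lt_of_lt_of_le hx.1 ht.1
    exact (hasDerivG r (2*r+w) (by linarith) (by linarith)).continuousAt.continuousWithinAt
  have h0mem : (0:ℝ) ∈ Icc (G x) (G zb) := ⟨hGx.le, hGzb.le⟩
  obtain ⟨c, hc, hc0⟩ := intermediate_value_Icc hxzb.le hcont h0mem
  have hc0' : G c = 0 := hc0
  have hcpos : 0 < c := lt_of_lt_of_le hx.1 hc.1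
  refine ⟨c, ⟨hcpos, (hFG c hcpos).mpr hc0'⟩, ?_⟩
  rintro y ⟨hy0, hFy⟩
  have hGy : G y = 0 := (hFG y hy0).mp hFy
  rcases lt_trichotomy y c with h | h | h
  · exact (no_two_roots r w hr hw hy0 h hGy hc0').elim
  · exact h
  · exact (no_two_roots r w hr hw hcpos h hc0' hGy).elim
end

section
/- For every r > 0 and v > 1, the derivative of z ↦ F(z; r, v) evaluated at z = e^{r} − 1 is strictly positive; explicitly, with z = e^{r} − 1 it equals (1/(1+z))·(2/(1+2z) + 2 − ln(1+2z)/ln(1+z)) > 0. -/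
/-!
Since `log (1 + z) = r` at `z = eʳ - 1`, the quotient rule collapses `F'(z)` to the stated
expression. It is positive because `1 + 2z < (1 + z)²` gives `log (1 + 2z) < 2 log (1 + z)`.
-/

open Real

noncomputable def auxF (r v z : ℝ) : ℝ :=
  (r / log (1 + z) + 1) * log (1 + 2 * z) - 2 * r - log v

theorem hasDerivAt_auxF (r v : ℝ) {z : ℝ} (hlog : log (1 + z) ≠ 0) (h2 : 1 + 2 * z ≠ 0) :
    HasDerivAt (auxF r v)
      (-(r * (1 / (1 + z))) / log (1 + z) ^ 2 * log (1 + 2 * z)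
        + (r / log (1 + z) + 1) * (2 / (1 + 2 * z))) z := by
  have h1 : 1 + z ≠ 0 := fun h => hlog (by rw [h, log_zero])
  have hA : HasDerivAt (fun x => log (1 + x)) (1 / (1 + z)) z := by
    simpa using ((hasDerivAt_id z).const_add 1).log h1
  have hB : HasDerivAt (fun x => log (1 + 2 * x)) (2 / (1 + 2 * z)) z := by
    simpa using (((hasDerivAt_id z).const_mul 2).const_add 1).log h2
  have hC : HasDerivAt (fun x => r / log (1 + x) + 1)
      ((0 * log (1 + z) - r * (1 / (1 + z))) / log (1 + z) ^ 2) z :=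
    ((hasDerivAt_const z r).div hA hlog).add_const 1
  exact (((hC.mul hB).sub_const (2 * r)).sub_const (log v)).congr_deriv (by ring)

theorem deriv_auxF_of_log_eq (v : ℝ) {r z : ℝ} (hr : r ≠ 0) (hL : log (1 + z) = r)
    (h2 : 1 + 2 * z ≠ 0) :
    deriv (auxF r v) z
      = 1 / (1 + z) * (2 / (1 + 2 * z) + (2 - log (1 + 2 * z) / log (1 + z))) := by
  have h1 : 1 + z ≠ 0 := fun h => hr (by rw [← hL, h, log_zero])
  have hsum : 2 / (1 + 2 * z) + 2 = (1 + z) * (2 * (2 / (1 + 2 * z))) := by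
    field_simp
    ring
  rw [(hasDerivAt_auxF r v (hL ▸ hr) h2).deriv, hL, div_self hr, ← add_sub_assoc, hsum]
  field_simp
  ring

theorem log_one_add_two_mul_lt_two_mul_log_one_add {z : ℝ} (h2 : 0 < 1 + 2 * z) (hz : z ≠ 0) :
    log (1 + 2 * z) < 2 * log (1 + z) := by
  have hsq : 1 + 2 * z < (1 + z) ^ 2 := by nlinarith [sq_pos_of_ne_zero hz]
  calc log (1 + 2 * z) < log ((1 + z) ^ 2) := log_lt_log h2 hsq
    _ = 2 * log (1 + z) := by rw [log_pow]; norm_num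

theorem one_div_one_add_mul_deriv_value_pos {z : ℝ} (hz : 0 < z) :
    0 < 1 / (1 + z) * (2 / (1 + 2 * z) + (2 - log (1 + 2 * z) / log (1 + z))) := by
  have hlog : 0 < log (1 + z) := log_pos (by linarith)
  have hratio : log (1 + 2 * z) / log (1 + z) < 2 :=
    (div_lt_iff₀ hlog).mpr
      (log_one_add_two_mul_lt_two_mul_log_one_add (by linarith) hz.ne')
  have hfrac : 0 < 2 / (1 + 2 * z) := by positivity
  exact mul_pos (by positivity) (by linarith)

theorem F_deriv_at_zmin_pos_general (r v : ℝ) (hr : 0 < r)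
    (z : ℝ) (hz : z = Real.exp r - 1) :
    deriv (fun z : ℝ =>
        (r / Real.log (1 + z) + 1) * Real.log (1 + 2 * z) - 2 * r - Real.log v) z
      = 1 / (1 + z) * (2 / (1 + 2 * z)
          + (2 - Real.log (1 + 2 * z) / Real.log (1 + z))) ∧
    0 < 1 / (1 + z) * (2 / (1 + 2 * z)
          + (2 - Real.log (1 + 2 * z) / Real.log (1 + z))) := by
  have hz0 : 0 < z := by linarith [add_one_lt_exp hr.ne']
  have hL : log (1 + z) = r := by rw [hz, add_sub_cancel, log_exp]
  exact ⟨deriv_auxF_of_log_eq v hr.ne' hL (by linarith),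
    one_div_one_add_mul_deriv_value_pos hz0⟩

/-- The derivative of `z ↦ F(z; r, v)` at `z = eʳ − 1` equals
`(1/(1+z)) (2/(1+2z) + 2 − ln(1+2z)/ln(1+z))`, and is strictly positive. -/
theorem F_deriv_at_zmin_pos (r v : ℝ) (hr : 0 < r) (hv : 1 < v)
    (z : ℝ) (hz : z = Real.exp r - 1) :
    deriv (fun z : ℝ =>
        (r / Real.log (1 + z) + 1) * Real.log (1 + 2 * z) - 2 * r - Real.log v) z
      = 1 / (1 + z) * (2 / (1 + 2 * z)
          + (2 - Real.log (1 + 2 * z) / Real.log (1 + z))) ∧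
    0 < 1 / (1 + z) * (2 / (1 + 2 * z)
          + (2 - Real.log (1 + 2 * z) / Real.log (1 + z))) :=
  F_deriv_at_zmin_pos_general r v hr z hz
end

section
/- The derivative Φ'(z) of the function Φ(z) = ln(1+2z)/ln(1+z) satisfies lim_{z→0⁺} Φ'(z) = −1. -/
open Real Filter Set Topology

private lemma slope_lim (c : ℝ) :
    Tendsto (fun z : ℝ => Real.log (1 + c * z) / z) (𝓝[>] 0) (𝓝 c) := by
  have h : HasDerivAt (fun z : ℝ => Real.log (1 + c * z)) c 0 := by
    have h1 : HasDerivAt (fun z : ℝ => 1 + c * z) c 0 := by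
      simpa using ((hasDerivAt_id (0:ℝ)).const_mul c).const_add 1
    have := (Real.hasDerivAt_log (by norm_num : (1:ℝ) + c * 0 ≠ 0)).comp 0 h1
    simpa [Function.comp_def] using this
  have hs := hasDerivAt_iff_tendsto_slope.mp h
  have hs' : Tendsto (slope (fun z : ℝ => Real.log (1 + c * z)) 0) (𝓝[>] 0) (𝓝 c) :=
    hs.mono_left (nhdsWithin_mono _ (fun x hx => ne_of_gt hx))
  refine hs'.congr' ?_
  filter_upwards [self_mem_nhdsWithin] with z hz
  simp [slope, div_eq_inv_mul, mul_comm]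

private lemma upos : ∀ z : ℝ, 0 < z → 0 < Real.log (1 + z) := fun z hz =>
  Real.log_pos (by linarith)

/-- The derivative of `Φ(z) = ln(1+2z)/ln(1+z)` tends to `−1` as `z → 0⁺`. -/
theorem phi_deriv_tendsto_neg_one :
    Filter.Tendsto (deriv (fun z : ℝ => Real.log (1 + 2 * z) / Real.log (1 + z)))
      (nhdsWithin 0 (Set.Ioi 0)) (nhds (-1)) := by
  set u : ℝ → ℝ := fun z => Real.log (1 + z) with hu
  set v : ℝ → ℝ := fun z => Real.log (1 + 2 * z) with hv
  set N : ℝ → ℝ := fun z => 2 * (1 + z) * u z - (1 + 2 * z) * v z with hN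
  set D : ℝ → ℝ := fun z => (1 + z) * (1 + 2 * z) * (u z) ^ 2 with hD
  have hUd : ∀ z : ℝ, 0 < z → HasDerivAt u (1 / (1 + z)) z := by
    intro z hz
    have h1 : HasDerivAt (fun w : ℝ => 1 + w) 1 z := by
      simpa using (hasDerivAt_id z).const_add 1
    have := (Real.hasDerivAt_log (by linarith : (1:ℝ) + z ≠ 0)).comp z h1
    rw [hu]
    simpa [one_div, Function.comp_def] using this
  have hVd : ∀ z : ℝ, 0 < z → HasDerivAt v (2 / (1 + 2 * z)) z := by
    intro z hz
    have h1 : HasDerivAt (fun w : ℝ => 1 + 2 * w) 2 z := by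
      simpa using ((hasDerivAt_id z).const_mul 2).const_add 1
    have := (Real.hasDerivAt_log (by linarith : (1:ℝ) + 2 * z ≠ 0)).comp z h1
    rw [hv]
    refine this.congr_deriv ?_
    field_simp
  -- continuity limits at 0 from the right
  have hu0 : Tendsto u (𝓝[>] (0:ℝ)) (𝓝 0) := by
    have hc : ContinuousAt u 0 := by
      rw [hu]
      exact (Real.continuousAt_log (by norm_num)).comp (by fun_prop)
    have : u 0 = 0 := by simp [hu]
    simpa [this] using hc.continuousWithinAt.tendsto
  have hv0 : Tendsto v (𝓝[>] (0:ℝ)) (𝓝 0) := by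
    have hc : ContinuousAt v 0 := by
      rw [hv]
      exact (Real.continuousAt_log (by norm_num)).comp (by fun_prop)
    have : v 0 = 0 := by simp [hv]
    simpa [this] using hc.continuousWithinAt.tendsto
  -- Step 1: deriv Φ = N / D on Ioi 0
  have step1 : ∀ z : ℝ, 0 < z →
      deriv (fun z : ℝ => Real.log (1 + 2 * z) / Real.log (1 + z)) z = N z / D z := by
    intro z hz
    have hune : u z ≠ 0 := ne_of_gt (upos z hz)
    have hd := ((hVd z hz).div (hUd z hz) hune)
    rw [show (fun z : ℝ => Real.log (1 + 2 * z) / Real.log (1 + z)) = v / u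
      from rfl, hd.deriv]
    have h1 : (1:ℝ) + z ≠ 0 := by linarith
    have h2 : (1:ℝ) + 2 * z ≠ 0 := by linarith
    rw [hN, hD]
    field_simp
  -- Step 2: L'Hopital on N/D
  have hND : Tendsto (fun z => N z / D z) (𝓝[>] (0:ℝ)) (𝓝 (-1)) := by
    apply HasDerivAt.lhopital_zero_nhdsGT
      (f' := fun z => 2 * (u z - v z))
      (g' := fun z => (3 + 4 * z) * (u z) ^ 2 + 2 * (1 + 2 * z) * u z)
    · filter_upwards [self_mem_nhdsWithin] with z hz
      have hz : (0:ℝ) < z := hz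
      have hu' := hUd z hz
      have hv' := hVd z hz
      have h1 : (1:ℝ) + z ≠ 0 := by linarith
      have h2 : (1:ℝ) + 2 * z ≠ 0 := by linarith
      have hca : HasDerivAt (fun w : ℝ => 2 * (1 + w)) 2 z := by
        simpa using ((hasDerivAt_id z).const_add 1).const_mul 2
      have hcb : HasDerivAt (fun w : ℝ => 1 + 2 * w) 2 z := by
        simpa using ((hasDerivAt_id z).const_mul 2).const_add 1
      have hab := (hca.mul hu').sub (hcb.mul hv')
      rw [hN]
      refine hab.congr_deriv ?_
      field_simp
      ring
    · filter_upwards [self_mem_nhdsWithin] with z hz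
      have hz : (0:ℝ) < z := hz
      have hu' := hUd z hz
      have h1 : (1:ℝ) + z ≠ 0 := by linarith
      have ha : HasDerivAt (fun w : ℝ => (1 + w) * (1 + 2 * w)) (3 + 4 * z) z := by
        have h3 : HasDerivAt (fun w : ℝ => 1 + w) 1 z := by
          simpa using (hasDerivAt_id z).const_add 1
        have h4 : HasDerivAt (fun w : ℝ => 1 + 2 * w) 2 z := by
          simpa using ((hasDerivAt_id z).const_mul 2).const_add 1
        refine (h3.mul h4).congr_deriv ?_
        ring
      have hb : HasDerivAt (fun w => (u w) ^ 2) (2 * u z * (1 / (1 + z))) z := by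
        simpa [mul_comm, mul_assoc, Pi.pow_def] using hu'.pow 2
      rw [hD]
      refine (ha.mul hb).congr_deriv ?_
      field_simp
    · filter_upwards [self_mem_nhdsWithin] with z hz
      have hz : (0:ℝ) < z := hz
      have h1 := upos z hz
      have hsq : (0:ℝ) < (u z) ^ 2 := by positivity
      have : (0:ℝ) < (3 + 4 * z) * (u z) ^ 2 + 2 * (1 + 2 * z) * u z := by nlinarith
      exact ne_of_gt this
    · -- N → 0
      have hc1 : Tendsto (fun z : ℝ => 2 * (1 + z)) (𝓝[>] (0:ℝ)) (𝓝 2) := by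
        have : ContinuousAt (fun z : ℝ => 2 * (1 + z)) 0 := by fun_prop
        simpa using this.continuousWithinAt.tendsto
      have hc2 : Tendsto (fun z : ℝ => 1 + 2 * z) (𝓝[>] (0:ℝ)) (𝓝 1) := by
        have : ContinuousAt (fun z : ℝ => 1 + 2 * z) 0 := by fun_prop
        simpa using this.continuousWithinAt.tendsto
      have := (hc1.mul hu0).sub (hc2.mul hv0)
      rw [hN]
      simpa using this
    · -- D → 0
      have hc3 : Tendsto (fun z : ℝ => (1 + z) * (1 + 2 * z)) (𝓝[>] (0:ℝ)) (𝓝 1) := by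
        have : ContinuousAt (fun z : ℝ => (1 + z) * (1 + 2 * z)) 0 := by fun_prop
        simpa using this.continuousWithinAt.tendsto
      have := hc3.mul (hu0.pow 2)
      rw [hD]
      simpa using this
    · -- limit of f'/g'
      have hvu : Tendsto (fun z => v z / u z) (𝓝[>] (0:ℝ)) (𝓝 2) := by
        have h1 : Tendsto (fun z => u z / z) (𝓝[>] (0:ℝ)) (𝓝 1) := by
          have := slope_lim 1
          simpa [hu] using this
        have h2 : Tendsto (fun z => v z / z) (𝓝[>] (0:ℝ)) (𝓝 2) := slope_lim 2
        have h3 := h2.div h1 one_ne_zero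
        norm_num at h3
        refine h3.congr' ?_
        filter_upwards [self_mem_nhdsWithin] with z hz
        have hz : (0:ℝ) < z := hz
        have h4 : u z ≠ 0 := ne_of_gt (upos z hz)
        simp only [Pi.div_apply]
        field_simp
      have hnum : Tendsto (fun z => 2 * (1 - v z / u z)) (𝓝[>] (0:ℝ)) (𝓝 (-2)) := by
        have h0 : Tendsto (fun z => (1:ℝ) - v z / u z) (𝓝[>] (0:ℝ)) (𝓝 (1 - 2)) :=
          tendsto_const_nhds.sub hvu
        have := h0.const_mul 2
        norm_num at this
        exact this
      have hden : Tendsto (fun z => (3 + 4 * z) * u z + 2 * (1 + 2 * z))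
          (𝓝[>] (0:ℝ)) (𝓝 2) := by
        have h3 : Tendsto (fun z : ℝ => 3 + 4 * z) (𝓝[>] (0:ℝ)) (𝓝 3) := by
          have : ContinuousAt (fun z : ℝ => 3 + 4 * z) 0 := by fun_prop
          simpa using this.continuousWithinAt.tendsto
        have h4 : Tendsto (fun z : ℝ => 2 * (1 + 2 * z)) (𝓝[>] (0:ℝ)) (𝓝 2) := by
          have : ContinuousAt (fun z : ℝ => 2 * (1 + 2 * z)) 0 := by fun_prop
          simpa using this.continuousWithinAt.tendsto
        have := (h3.mul hu0).add h4
        simpa using this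
      have hq := hnum.div hden two_ne_zero
      norm_num at hq
      refine hq.congr' ?_
      filter_upwards [self_mem_nhdsWithin] with z hz
      have hz : (0:ℝ) < z := hz
      have h4 : u z ≠ 0 := ne_of_gt (upos z hz)
      simp only [Pi.div_apply]
      field_simp
  refine hND.congr' ?_
  filter_upwards [self_mem_nhdsWithin] with z hz
  exact (step1 z hz).symm
end

section
/- Define H(z) = (1+2z)²·Φ''(z) for z > 0, where Φ(z) = ln(1+2z)/ln(1+z) and Φ'' is its second derivative. Then lim_{z→+∞} H(z) = 0. -/
open Real Filter

noncomputable def g (z : ℝ) : ℝ :=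
  ((1+2*z)⁻¹*2 * Real.log (1+z) - Real.log (1+2*z)*((1+z)⁻¹*1)) / Real.log (1+z)^2

lemma phi_hasDerivAt {z : ℝ} (hz : 0 < z) :
    HasDerivAt (fun z : ℝ => Real.log (1 + 2 * z) / Real.log (1 + z)) (g z) z := by
  have hu0 : (0:ℝ) < 1 + z := by linarith
  have hv0 : (0:ℝ) < 1 + 2*z := by linarith
  have hlog : Real.log (1+z) ≠ 0 := ne_of_gt (Real.log_pos (by linarith))
  have hu : HasDerivAt (fun z:ℝ => 1 + z) 1 z := by
    simpa using (hasDerivAt_id z).const_add 1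
  have hv : HasDerivAt (fun z:ℝ => 1 + 2*z) 2 z := by
    simpa using ((hasDerivAt_id z).const_mul 2).const_add 1
  have ha : HasDerivAt (fun z:ℝ => Real.log (1+z)) ((1+z)⁻¹*1) z :=
    (Real.hasDerivAt_log hu0.ne').comp z hu
  have hb : HasDerivAt (fun z:ℝ => Real.log (1+2*z)) ((1+2*z)⁻¹*2) z :=
    by have := (Real.hasDerivAt_log hv0.ne').comp z hv; exact this
  exact hb.div ha hlog

noncomputable def E (z : ℝ) : ℝ :=
  ((Real.log (1+2*z)/(1+z)^2 - 4*Real.log (1+z)/(1+2*z)^2) * Real.log (1+z)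
    - (2/(1+z))*(2*Real.log (1+z)/(1+2*z) - Real.log (1+2*z)/(1+z))) / (Real.log (1+z))^3

lemma g_hasDerivAt {z : ℝ} (hz : 0 < z) : HasDerivAt g (E z) z := by
  have hu0 : (0:ℝ) < 1 + z := by linarith
  have hv0 : (0:ℝ) < 1 + 2*z := by linarith
  have hlog : Real.log (1+z) ≠ 0 := ne_of_gt (Real.log_pos (by linarith))
  have hu : HasDerivAt (fun z:ℝ => 1 + z) 1 z := by
    simpa using (hasDerivAt_id z).const_add 1
  have hv : HasDerivAt (fun z:ℝ => 1 + 2*z) 2 z := by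
    simpa using ((hasDerivAt_id z).const_mul 2).const_add 1
  have ha : HasDerivAt (fun z:ℝ => Real.log (1+z)) ((1+z)⁻¹*1) z :=
    (Real.hasDerivAt_log hu0.ne').comp z hu
  have hb : HasDerivAt (fun z:ℝ => Real.log (1+2*z)) ((1+2*z)⁻¹*2) z :=
    by have := (Real.hasDerivAt_log hv0.ne').comp z hv; exact this
  have hvi : HasDerivAt (fun z:ℝ => (1+2*z)⁻¹) (-2 / (1+2*z)^2) z := by
    exact hv.inv hv0.ne'
  have hui : HasDerivAt (fun z:ℝ => (1+z)⁻¹) (-1 / (1+z)^2) z := by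
    exact hu.inv hu0.ne'
  have hN : HasDerivAt
      (fun z:ℝ => (1+2*z)⁻¹*2 * Real.log (1+z) - Real.log (1+2*z)*((1+z)⁻¹*1))
      ((-2 / (1+2*z)^2*2) * Real.log (1+z) + ((1+2*z)⁻¹*2) * ((1+z)⁻¹*1)
        - (((1+2*z)⁻¹*2) * ((1+z)⁻¹*1) + Real.log (1+2*z) * (-1 / (1+z)^2*1))) z :=
    ((hvi.mul_const 2).mul ha).sub (hb.mul (hui.mul_const 1))
  have hD : HasDerivAt (fun z:ℝ => Real.log (1+z)^2)
      (2 * Real.log (1+z)^1 * ((1+z)⁻¹*1)) z := by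
    exact (ha.pow 2).congr_deriv (by norm_num)
  have hDne : Real.log (1+z)^2 ≠ 0 := pow_ne_zero _ hlog
  have := hN.div hD hDne
  refine this.congr_deriv (Eq.symm ?_)
  show E z = _
  unfold E
  field_simp
  ring

lemma deriv2_eq {z : ℝ} (hz : 0 < z) :
    deriv (deriv (fun z : ℝ => Real.log (1 + 2 * z) / Real.log (1 + z))) z = E z := by
  have hev : deriv (fun z : ℝ => Real.log (1 + 2 * z) / Real.log (1 + z)) =ᶠ[nhds z] g := by
    filter_upwards [Ioi_mem_nhds hz] with x hx
    exact (phi_hasDerivAt hx).deriv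
  rw [hev.deriv_eq]
  exact (g_hasDerivAt hz).deriv

/-- `H(z) = (1+2z)² Φ''(z)` tends to `0` as `z → +∞`, where
`Φ(z) = ln(1+2z)/ln(1+z)`. -/
theorem H_tendsto_zero :
    Filter.Tendsto
      (fun z : ℝ => (1 + 2 * z) ^ 2 *
        deriv (deriv (fun z : ℝ => Real.log (1 + 2 * z) / Real.log (1 + z))) z)
      Filter.atTop (nhds 0) := by
  -- limits of building blocks
  have hlogtop : Tendsto (fun z : ℝ => Real.log (1+z)) atTop atTop :=
    Real.tendsto_log_atTop.comp (tendsto_atTop_add_const_left _ 1 tendsto_id)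
  have hinv : Tendsto (fun z : ℝ => 1 / Real.log (1+z)) atTop (nhds 0) := by
    simpa [one_div, Pi.inv_def] using hlogtop.inv_tendsto_atTop
  have hratio : Tendsto (fun z : ℝ => (1+2*z)/(1+z)) atTop (nhds 2) := by
    have h1 : Tendsto (fun z : ℝ => 2 - 1/(1+z)) atTop (nhds 2) := by
      have : Tendsto (fun z : ℝ => 1/(1+z)) atTop (nhds 0) := by
        simpa [one_div, Pi.inv_def] using
          (tendsto_atTop_add_const_left _ 1 (tendsto_id (α := ℝ))).inv_tendsto_atTop
      simpa using (tendsto_const_nhds (x := (2:ℝ))).sub this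
    refine h1.congr' ?_
    filter_upwards [eventually_gt_atTop (0:ℝ)] with z hz
    have hu0 : (1:ℝ) + z ≠ 0 := by positivity
    field_simp
    ring
  have hlograt : Tendsto (fun z : ℝ => Real.log (1+2*z) / Real.log (1+z)) atTop (nhds 1) := by
    have hc : Tendsto (fun z : ℝ => Real.log ((1+2*z)/(1+z))) atTop (nhds (Real.log 2)) :=
      ((Real.continuousAt_log (by norm_num)).tendsto.comp hratio)
    have h1 : Tendsto (fun z : ℝ => 1 + Real.log ((1+2*z)/(1+z)) * (1/Real.log (1+z)))
        atTop (nhds 1) := by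
      have := (hc.mul hinv)
      simpa using (tendsto_const_nhds (x := (1:ℝ))).add this
    refine h1.congr' ?_
    filter_upwards [eventually_gt_atTop (0:ℝ)] with z hz
    have hu0 : (0:ℝ) < 1 + z := by linarith
    have hv0 : (0:ℝ) < 1 + 2*z := by linarith
    have hlog : Real.log (1+z) ≠ 0 := ne_of_gt (Real.log_pos (by linarith))
    rw [Real.log_div hv0.ne' hu0.ne']
    field_simp
    ring
  -- the explicit sum S
  have hS : Tendsto (fun z : ℝ =>
      (Real.log (1+2*z)/Real.log (1+z)) * ((1+2*z)/(1+z))^2 * (1/Real.log (1+z))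
      - 4 * (1/Real.log (1+z))
      - 4*((1+2*z)/(1+z)) * (1/Real.log (1+z))^2
      + 2*(Real.log (1+2*z)/Real.log (1+z)) * ((1+2*z)/(1+z))^2 * (1/Real.log (1+z))^2)
      atTop (nhds 0) := by
    have t1 := (hlograt.mul (hratio.pow 2)).mul hinv
    have t2 := (tendsto_const_nhds (x := (4:ℝ))).mul hinv
    have t3 := ((tendsto_const_nhds (x := (4:ℝ))).mul hratio).mul (hinv.pow 2)
    have t4 := ((tendsto_const_nhds (x := (2:ℝ))).mul hlograt |>.mul (hratio.pow 2)).mul (hinv.pow 2)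
    have := ((t1.sub t2).sub t3).add t4
    simpa [mul_assoc] using this
  refine hS.congr' ?_
  filter_upwards [eventually_gt_atTop (0:ℝ)] with z hz
  rw [deriv2_eq hz]
  have hu0 : (0:ℝ) < 1 + z := by linarith
  have hv0 : (0:ℝ) < 1 + 2*z := by linarith
  have hlog : Real.log (1+z) ≠ 0 := ne_of_gt (Real.log_pos (by linarith))
  unfold E
  field_simp
  ring
end

section
/- Define H(z) = (1+2z)²·Φ''(z) for z > 0, where Φ(z) = ln(1+2z)/ln(1+z) and Φ'' is its second derivative. Then H is strictly decreasing on (0, ∞); equivalently, H'(z) < 0 for every z > 0. -/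
open Real Set Filter

private lemma denU_pos {x : ℝ} (hx : -1 < x) : (0:ℝ) < 3*(10+12*x+3*x^2) := by nlinarith [sq_nonneg (x+1), sq_nonneg x]

private lemma denL_pos {x : ℝ} (hx : -1 < x) : (0:ℝ) < 3*(20+30*x+12*x^2+x^3) := by nlinarith [sq_nonneg (x+1), sq_nonneg x, sq_nonneg (x+2)]

private lemma log_upper {x : ℝ} (hx : 0 ≤ x) :
    Real.log (1+x) ≤ x*(30+21*x+x^2)/(3*(10+12*x+3*x^2)) := by
  set g : ℝ → ℝ := fun x => x*(30+21*x+x^2)/(3*(10+12*x+3*x^2)) - Real.log (1+x) with hg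
  have key : ∀ y : ℝ, 0 < y →
      HasDerivAt g (((30+21*y+y^2) + y*(21+2*y))*(3*(10+12*y+3*y^2))/((3*(10+12*y+3*y^2))^2)
        - (y*(30+21*y+y^2))*(3*(12+6*y))/((3*(10+12*y+3*y^2))^2) - (1/(1+y))) y := by
    intro y hy
    have hd : (0:ℝ) < 3*(10+12*y+3*y^2) := denU_pos (by linarith)
    have h1 : HasDerivAt (fun t : ℝ => t*(30+21*t+t^2)) ((30+21*y+y^2) + y*(21+2*y)) y := by
      have := (hasDerivAt_id y).mul (((((hasDerivAt_id y).const_mul (21:ℝ)).const_add 30).add ((hasDerivAt_id y).pow 2)))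
      convert this using 1
      · rfl
      · rfl
      · ext t; simp only [id_eq, Pi.mul_apply, Pi.add_apply, Pi.pow_apply]
      · simp only [id_eq, Pi.mul_apply, Pi.add_apply, Pi.pow_apply]; ring
    have h2 : HasDerivAt (fun t : ℝ => 3*(10+12*t+3*t^2)) (3*(12+6*y)) y := by
      have := ((((hasDerivAt_id y).const_mul (12:ℝ)).const_add 10).add (((hasDerivAt_id y).pow 2).const_mul 3)).const_mul (3:ℝ)
      convert this using 1
      · rfl
      · rfl
      · ext t; simp only [id_eq, Pi.mul_apply, Pi.add_apply, Pi.pow_apply]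
      · simp only [id_eq, Pi.mul_apply, Pi.add_apply, Pi.pow_apply]; ring
    have h3 := h1.div h2 (ne_of_gt hd)
    have h4 : HasDerivAt (fun t : ℝ => Real.log (1+t)) (1/(1+y)) y := by
      have := ((hasDerivAt_id y).const_add (1:ℝ)).log (by positivity)
      simpa using this
    have := h3.sub h4
    convert this using 1
    · rfl
    · rfl
    · rfl
    · ring
  have mono : MonotoneOn g (Ici 0) := by
    apply monotoneOn_of_deriv_nonneg (convex_Ici 0)
    · apply ContinuousOn.sub
      · apply ContinuousOn.div (by fun_prop) (by fun_prop)
        intro y hy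
        have hy0 : (0:ℝ) ≤ y := hy
        exact ne_of_gt (denU_pos (by linarith))
      · apply ContinuousOn.log (by fun_prop)
        intro y hy
        have hy0 : (0:ℝ) ≤ y := hy
        positivity
    · intro y hy
      rw [interior_Ici] at hy
      exact ((key y hy).differentiableAt).differentiableWithinAt
    · intro y hy
      rw [interior_Ici] at hy
      have hy' : (0:ℝ) < y := hy
      rw [(key y hy).deriv]
      have hd : (0:ℝ) < 3*(10+12*y+3*y^2) := denU_pos (by linarith)
      have h1y : (0:ℝ) < 1+y := by linarith
      have heq : ((30+21*y+y^2) + y*(21+2*y))*(3*(10+12*y+3*y^2))/((3*(10+12*y+3*y^2))^2)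
        - (y*(30+21*y+y^2))*(3*(12+6*y))/((3*(10+12*y+3*y^2))^2) - (1/(1+y))
          = 9*y^5/((3*(10+12*y+3*y^2))^2*(1+y)) := by
        field_simp
        ring
      rw [heq]
      exact le_of_lt (div_pos (mul_pos (by norm_num) (pow_pos hy' 5)) (mul_pos (pow_pos hd 2) h1y))
  have h0 : g 0 = 0 := by simp [hg]
  have := mono (le_refl (0:ℝ) : (0:ℝ) ∈ Ici 0) (hx : x ∈ Ici 0) hx
  rw [h0] at this
  simpa [hg] using this

private lemma log_lower {x : ℝ} (hx : 0 ≤ x) :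
    x*(60+60*x+11*x^2)/(3*(20+30*x+12*x^2+x^3)) ≤ Real.log (1+x) := by
  set g : ℝ → ℝ := fun x => Real.log (1+x) - x*(60+60*x+11*x^2)/(3*(20+30*x+12*x^2+x^3)) with hg
  have key : ∀ y : ℝ, 0 < y →
      HasDerivAt g ((1/(1+y)) - (((60+60*y+11*y^2) + y*(60+22*y))*(3*(20+30*y+12*y^2+y^3))/((3*(20+30*y+12*y^2+y^3))^2)
        - (y*(60+60*y+11*y^2))*(3*(30+24*y+3*y^2))/((3*(20+30*y+12*y^2+y^3))^2))) y := by
    intro y hy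
    have hd : (0:ℝ) < 3*(20+30*y+12*y^2+y^3) := denL_pos (by linarith)
    have h1 : HasDerivAt (fun t : ℝ => t*(60+60*t+11*t^2)) ((60+60*y+11*y^2) + y*(60+22*y)) y := by
      have := (hasDerivAt_id y).mul (((((hasDerivAt_id y).const_mul (60:ℝ)).const_add 60).add (((hasDerivAt_id y).pow 2).const_mul 11)))
      convert this using 1
      · rfl
      · rfl
      · ext t; simp only [id_eq, Pi.mul_apply, Pi.add_apply, Pi.pow_apply]
      · simp only [id_eq, Pi.mul_apply, Pi.add_apply, Pi.pow_apply]; ring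
    have h2 : HasDerivAt (fun t : ℝ => 3*(20+30*t+12*t^2+t^3)) (3*(30+24*y+3*y^2)) y := by
      have := (((((hasDerivAt_id y).const_mul (30:ℝ)).const_add 20).add ((((hasDerivAt_id y).pow 2).const_mul 12).add ((hasDerivAt_id y).pow 3)))).const_mul (3:ℝ)
      convert this using 1
      · rfl
      · rfl
      · ext t; simp only [id_eq, Pi.mul_apply, Pi.add_apply, Pi.pow_apply]; ring
      · simp only [id_eq, Pi.mul_apply, Pi.add_apply, Pi.pow_apply]; ring
    have h3 := h1.div h2 (ne_of_gt hd)
    have h4 : HasDerivAt (fun t : ℝ => Real.log (1+t)) (1/(1+y)) y := by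
      have := ((hasDerivAt_id y).const_add (1:ℝ)).log (by positivity)
      simpa using this
    have := h4.sub h3
    convert this using 1
    · rfl
    · rfl
    · rfl
    · ring
  have mono : MonotoneOn g (Ici 0) := by
    apply monotoneOn_of_deriv_nonneg (convex_Ici 0)
    · apply ContinuousOn.sub
      · apply ContinuousOn.log (by fun_prop)
        intro y hy
        have hy0 : (0:ℝ) ≤ y := hy
        positivity
      · apply ContinuousOn.div (by fun_prop) (by fun_prop)
        intro y hy
        have hy0 : (0:ℝ) ≤ y := hy
        exact ne_of_gt (denL_pos (by linarith))
    · intro y hy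
      rw [interior_Ici] at hy
      exact ((key y hy).differentiableAt).differentiableWithinAt
    · intro y hy
      rw [interior_Ici] at hy
      have hy' : (0:ℝ) < y := hy
      rw [(key y hy).deriv]
      have hd : (0:ℝ) < 3*(20+30*y+12*y^2+y^3) := denL_pos (by linarith)
      have h1y : (0:ℝ) < 1+y := by linarith
      have heq : (1/(1+y)) - (((60+60*y+11*y^2) + y*(60+22*y))*(3*(20+30*y+12*y^2+y^3))/((3*(20+30*y+12*y^2+y^3))^2)
        - (y*(60+60*y+11*y^2))*(3*(30+24*y+3*y^2))/((3*(20+30*y+12*y^2+y^3))^2))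
          = 9*y^6/((3*(20+30*y+12*y^2+y^3))^2*(1+y)) := by
        field_simp
        ring
      rw [heq]
      exact le_of_lt (div_pos (mul_pos (by norm_num) (pow_pos hy' 6)) (mul_pos (pow_pos hd 2) h1y))
  have h0 : g 0 = 0 := by simp [hg]
  have := mono (le_refl (0:ℝ) : (0:ℝ) ∈ Ici 0) (hx : x ∈ Ici 0) hx
  rw [h0] at this
  simpa [hg] using this


noncomputable def phi1 (z : ℝ) : ℝ :=
  (2/(1+2*z) * Real.log (1+z) - Real.log (1+2*z) * (1/(1+z))) / (Real.log (1+z))^2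

noncomputable def phi2 (z : ℝ) : ℝ :=
  (Real.log (1+z) * Real.log (1+2*z)/(1+z)^2 - 4*(Real.log (1+z))^2/(1+2*z)^2
    - 4*Real.log (1+z)/((1+z)*(1+2*z)) + 2*Real.log (1+2*z)/(1+z)^2) / (Real.log (1+z))^3

noncomputable def Hxp (z : ℝ) : ℝ :=
  ((1+2*z)^2 * Real.log (1+2*z) * (Real.log (1+z) + 2) / (1+z)^2
    - 4*(Real.log (1+z))^2 - 4*(1+2*z)*Real.log (1+z)/(1+z)) / (Real.log (1+z))^3

noncomputable def Hd (z : ℝ) : ℝ :=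
  (2*(1+z)*Real.log (1+z)*((1+4*z)*Real.log (1+z) + 6*(1+2*z))
    - 2*(1+2*z)*Real.log (1+2*z)*(3*(1+2*z) + (2*z-1)*Real.log (1+z) - (Real.log (1+z))^2))
    / ((1+z)^3*(Real.log (1+z))^4)

private lemma hu_pos {z : ℝ} (hz : 0 < z) : 0 < Real.log (1+z) := Real.log_pos (by linarith)
private lemma hv_pos {z : ℝ} (hz : 0 < z) : 0 < Real.log (1+2*z) := Real.log_pos (by linarith)

private lemma hdA {z : ℝ} : HasDerivAt (fun t : ℝ => 1+t) 1 z := by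
  simpa using (hasDerivAt_id z).const_add (1:ℝ)

private lemma hdB {z : ℝ} : HasDerivAt (fun t : ℝ => 1+2*t) 2 z := by
  simpa using ((hasDerivAt_id z).const_mul (2:ℝ)).const_add (1:ℝ)

private lemma hdu {z : ℝ} (hz : 0 < z) : HasDerivAt (fun t : ℝ => Real.log (1+t)) (1/(1+z)) z := by
  simpa using hdA.log (by positivity : (1:ℝ)+z ≠ 0)

private lemma hdv {z : ℝ} (hz : 0 < z) : HasDerivAt (fun t : ℝ => Real.log (1+2*t)) (2/(1+2*z)) z := by
  simpa using hdB.log (by positivity : (1:ℝ)+2*z ≠ 0)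

private lemma d1 {z : ℝ} (hz : 0 < z) :
    HasDerivAt (fun t : ℝ => Real.log (1+2*t) / Real.log (1+t)) (phi1 z) z := by
  have h := (hdv hz).div (hdu hz) (ne_of_gt (hu_pos hz))
  have hgoal : HasDerivAt (fun t : ℝ => Real.log (1+2*t) / Real.log (1+t))
      ((2/(1+2*z) * Real.log (1+z) - Real.log (1+2*z) * (1/(1+z))) / (Real.log (1+z))^2) z := by
    convert h using 1 <;> rfl
  exact hgoal

private lemma d2 {z : ℝ} (hz : 0 < z) : HasDerivAt phi1 (phi2 z) z := by
  have ha : (0:ℝ) < 1+z := by linarith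
  have hb : (0:ℝ) < 1+2*z := by linarith
  have hu0 := ne_of_gt (hu_pos hz)
  have ha0 := ne_of_gt ha
  have hb0 := ne_of_gt hb
  have hN1 : HasDerivAt (fun t : ℝ => 2/(1+2*t) * Real.log (1+t))
      ((0*(1+2*z) - 2*2)/(1+2*z)^2 * Real.log (1+z) + 2/(1+2*z) * (1/(1+z))) z :=
    (((hasDerivAt_const z (2:ℝ)).div hdB hb0)).mul (hdu hz)
  have hN2 : HasDerivAt (fun t : ℝ => Real.log (1+2*t) * (1/(1+t)))
      (2/(1+2*z) * (1/(1+z)) + Real.log (1+2*z) * ((0*(1+z) - 1*1)/(1+z)^2)) z :=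
    (hdv hz).mul ((hasDerivAt_const z (1:ℝ)).div hdA ha0)
  have hden : HasDerivAt (fun t : ℝ => (Real.log (1+t))^2)
      ((2:ℕ)*(Real.log (1+z))^(2-1) * (1/(1+z))) z := (hdu hz).pow 2
  have h := (hN1.sub hN2).div hden (by positivity)
  have hgoal : HasDerivAt (fun y : ℝ => (2/(1+2*y) * Real.log (1+y) - Real.log (1+2*y) * (1/(1+y))) / (Real.log (1+y))^2) (phi2 z) z := by
    convert h using 1
    · rfl
    · rfl
    · rfl
    rw [phi2]
    simp only [Pi.sub_apply, Pi.div_apply]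
    field_simp
    ring
  exact hgoal

private lemma dH {z : ℝ} (hz : 0 < z) : HasDerivAt Hxp (Hd z) z := by
  have ha : (0:ℝ) < 1+z := by linarith
  have hb : (0:ℝ) < 1+2*z := by linarith
  have hu0 := ne_of_gt (hu_pos hz)
  have ha0 := ne_of_gt ha
  have hb0 := ne_of_gt hb
  have hb2 : HasDerivAt (fun t : ℝ => (1+2*t)^2) ((2:ℕ)*(1+2*z)^(2-1)*2) z := hdB.pow 2
  -- p1 : (1+2t)^2 * log(1+2t) * (log(1+t)+2) / (1+t)^2
  have hnum : HasDerivAt (fun t : ℝ => (1+2*t)^2 * Real.log (1+2*t) * (Real.log (1+t) + 2))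
      ((((2:ℕ)*(1+2*z)^(2-1)*2) * Real.log (1+2*z) + (1+2*z)^2 * (2/(1+2*z))) * (Real.log (1+z) + 2)
        + (1+2*z)^2 * Real.log (1+2*z) * (1/(1+z))) z := by
    have h1 := (hb2.mul (hdv hz)).mul ((hdu hz).add_const 2)
    convert h1 using 1 <;> rfl
  have hden2 : HasDerivAt (fun t : ℝ => ((1:ℝ)+t)^2) ((2:ℕ)*(1+z)^(2-1)*1) z := hdA.pow 2
  have hp1 := hnum.div hden2 (by positivity)
  have hp2 : HasDerivAt (fun t : ℝ => 4*(Real.log (1+t))^2)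
      (4*((2:ℕ)*(Real.log (1+z))^(2-1) * (1/(1+z)))) z := ((hdu hz).pow 2).const_mul 4
  have hp3num : HasDerivAt (fun t : ℝ => 4*(1+2*t)*Real.log (1+t))
      ((4*2)*Real.log (1+z) + 4*(1+2*z)*(1/(1+z))) z :=
    ((hdB (z:=z)).const_mul (4:ℝ)).mul (hdu hz)
  have hp3 := hp3num.div hdA ha0
  have hP := (hp1.sub hp2).sub hp3
  have hden3 : HasDerivAt (fun t : ℝ => (Real.log (1+t))^3)
      ((3:ℕ)*(Real.log (1+z))^(3-1) * (1/(1+z))) z := (hdu hz).pow 3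
  have h := hP.div hden3 (by positivity)
  have hgoal : HasDerivAt (fun y : ℝ =>
      ((1+2*y)^2 * Real.log (1+2*y) * (Real.log (1+y) + 2) / (1+y)^2
        - 4*(Real.log (1+y))^2 - 4*(1+2*y)*Real.log (1+y)/(1+y)) / (Real.log (1+y))^3) (Hd z) z := by
    convert h using 1
    · rfl
    · rfl
    · rfl
    rw [Hd]
    simp only [Pi.sub_apply, Pi.div_apply]
    field_simp
    ring
  exact hgoal




private lemma usq_bound {z : ℝ} (hz : 6 ≤ z) : (Real.log (1+z))^2 ≤ 13/20*z := by
  have hz0 : (0:ℝ) < z := by linarith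
  set s := Real.sqrt (13/20*z) with hs
  have hs0 : 0 ≤ s := Real.sqrt_nonneg _
  have hs2 : s^2 = 13/20*z := Real.sq_sqrt (by linarith)
  have hs197 : 197/100 ≤ s := by nlinarith [hs2, hs0]
  have hsum := Real.sum_le_exp_of_nonneg hs0 6
  have hpoly : 1+s+s^2/2+s^3/6+s^4/24+s^5/120 ≤ Real.exp s := by
    have : ∑ i ∈ Finset.range 6, s^i/(Nat.factorial i) = 1+s+s^2/2+s^3/6+s^4/24+s^5/120 := by
      simp [Finset.sum_range_succ, Nat.factorial]
      try ring
    linarith [this ▸ hsum]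
  have hw : (0:ℝ) ≤ s - 197/100 := by linarith
  have hexp : 1+z ≤ Real.exp s := by
    have hz' : z = 20/13*s^2 := by rw [hs2]; ring
    nlinarith [hpoly, pow_nonneg hw 2, pow_nonneg hw 3, pow_nonneg hw 4, pow_nonneg hw 5]
  have hu_le : Real.log (1+z) ≤ s := by
    calc Real.log (1+z) ≤ Real.log (Real.exp s) := by
          apply Real.log_le_log (by linarith) hexp
      _ = s := Real.log_exp s
  calc (Real.log (1+z))^2 ≤ s^2 := by
        apply pow_le_pow_left₀ (Real.log_nonneg (by linarith)) hu_le
    _ = 13/20*z := hs2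

set_option maxHeartbeats 2000000 in
private lemma key_ineq {z : ℝ} (hz : 0 < z) :
    (1+z)*Real.log (1+z)*((1+4*z)*Real.log (1+z)+6*(1+2*z))
      < (1+2*z)*Real.log (1+2*z)*(3*(1+2*z)+(2*z-1)*Real.log (1+z)-(Real.log (1+z))^2) := by
  have ha : (0:ℝ) < 1+z := by linarith
  have hb : (0:ℝ) < 1+2*z := by linarith
  set u := Real.log (1+z) with hu
  set v := Real.log (1+2*z) with hv
  have hu0 : 0 < u := Real.log_pos (by linarith)
  have hv0 : 0 < v := Real.log_pos (by linarith)
  rcases le_or_gt z 6 with hz6 | hz6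
  · -- small case
    have hvlo : 2*z*(15+30*z+11*z^2) ≤ 3*(5+15*z+12*z^2+2*z^3)*v := by
      have h := log_lower (x := 2*z) (by linarith)
      rw [div_le_iff₀ (by positivity)] at h
      nlinarith [h]
    have hulo : z*(60+60*z+11*z^2) ≤ 3*(20+30*z+12*z^2+z^3)*u := by
      have h := log_lower (x := z) hz.le
      rw [div_le_iff₀ (by positivity)] at h
      linarith [h]
    have huhi : 3*(10+12*z+3*z^2)*u ≤ z*(30+21*z+z^2) := by
      have h := log_upper (x := z) hz.le
      rw [le_div_iff₀ (by positivity)] at h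
      linarith [h]
    have hX : 0 ≤ 3*(1+2*z)+(2*z-1)*u-u^2 := by
      have hd3sq : (0:ℝ) < (3*(10+12*z+3*z^2))^2 := by positivity
      have hXs : 0 ≤ (3*(10+12*z+3*z^2))^2 * (3*(1+2*z)+(2*z-1)*u-u^2) := by
        have f1 : (0:ℝ) ≤ (z*(30+21*z+z^2) - 3*(10+12*z+3*z^2)*u)*(3*(10+12*z+3*z^2)) :=
          mul_nonneg (by linarith) (by positivity)
        have f2 : (0:ℝ) ≤ (z*(30+21*z+z^2) - 3*(10+12*z+3*z^2)*u)*(z*(30+21*z+z^2) + 3*(10+12*z+3*z^2)*u) :=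
          mul_nonneg (by linarith) (by positivity)
        have f3 : (0:ℝ) ≤ 2*z*u*(3*(10+12*z+3*z^2))^2 := by positivity
        have f4 : (0:ℝ) ≤ z^5*(6-z) := mul_nonneg (by positivity) (by linarith)
        linarith [f1, f2, f3, f4, pow_nonneg hz.le 2, pow_nonneg hz.le 3,
          pow_nonneg hz.le 4, pow_nonneg hz.le 5, hz.le]
      exact (mul_nonneg_iff_of_pos_left hd3sq).mp hXs
    have he1 : 0 ≤ 3*(10+12*z+3*z^2) * (3*(20+30*z+12*z^2+z^3)*u - z*(60+60*z+11*z^2)) :=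
      mul_nonneg (by positivity) (by linarith)
    have he2 : 0 ≤ 3*(20+30*z+12*z^2+z^3) * (z*(30+21*z+z^2) - 3*(10+12*z+3*z^2)*u) :=
      mul_nonneg (by positivity) (by linarith)
    have hQ1 : (0:ℝ) < z^4*(60750000 + 449550000*z + 1451317500*z^2 + 2689659000*z^3 + 3165110100*z^4 + 2466634860*z^5 + 1285656255*z^6 + 440783046*z^7 + 94613481*z^8 + 11395080*z^9 + 578178*z^10) := by
      apply mul_pos (pow_pos hz 4)
      nlinarith [pow_pos hz 1, pow_pos hz 2, pow_pos hz 3, pow_pos hz 4, pow_pos hz 5,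
        pow_pos hz 6, pow_pos hz 7, pow_pos hz 8, pow_pos hz 9, pow_pos hz 10]
    have hq2 : (0:ℝ) < (60750000 + 449550000*z + 1450831500*z^2 + 2685106800*z^3 + 3146674500*z^4 + 2424593160*z^5 + 1226513295*z^6 + 387698778*z^7 + 64127556*z^8 + 440406*z^9 + (-1762749)*z^10 + (-272412)*z^11 + (-14922)*z^12 + (-216)*z^13) := by
      have h6 : (0:ℝ) ≤ 6 - z := by linarith
      have hber : (6:ℝ)^13 * (60750000 + 449550000*z + 1450831500*z^2 + 2685106800*z^3 + 3146674500*z^4 + 2424593160*z^5 + 1226513295*z^6 + 387698778*z^7 + 64127556*z^8 + 440406*z^9 + (-1762749)*z^10 + (-272412)*z^11 + (-14922)*z^12 + (-216)*z^13)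
          = 60750000*(6-z)^13 + 3487050000*z^1*(6-z)^12 + 89336034000*z^2*(6-z)^11 + 1349908642800*z^3*(6-z)^10 + 13387409460000*z^4*(6-z)^9 + 91686973736160*z^5*(6-z)^8 + 443938896136800*z^6*(6-z)^7 + 1528084893623328*z^7*(6-z)^6 + 3702746437858224*z^8*(6-z)^5 + 6147801280674576*z^9*(6-z)^4 + 6638917063127760*z^10*(6-z)^3 + 4218674688913392*z^11*(6-z)^2 + 1252092814268544*z^12*(6-z)^1 + 60749675087616*z^13 := by
        ring
      linarith [hber, pow_pos hz 13,
        mul_nonneg (pow_nonneg hz.le 1) (pow_nonneg h6 12),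
        mul_nonneg (pow_nonneg hz.le 2) (pow_nonneg h6 11),
        mul_nonneg (pow_nonneg hz.le 3) (pow_nonneg h6 10),
        mul_nonneg (pow_nonneg hz.le 4) (pow_nonneg h6 9),
        mul_nonneg (pow_nonneg hz.le 5) (pow_nonneg h6 8),
        mul_nonneg (pow_nonneg hz.le 6) (pow_nonneg h6 7),
        mul_nonneg (pow_nonneg hz.le 7) (pow_nonneg h6 6),
        mul_nonneg (pow_nonneg hz.le 8) (pow_nonneg h6 5),
        mul_nonneg (pow_nonneg hz.le 9) (pow_nonneg h6 4),
        mul_nonneg (pow_nonneg hz.le 10) (pow_nonneg h6 3),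
        mul_nonneg (pow_nonneg hz.le 11) (pow_nonneg h6 2),
        mul_nonneg (pow_nonneg hz.le 12) (pow_nonneg h6 1),
        pow_nonneg h6 13]
    have hQ2 : (0:ℝ) < z^4*(60750000 + 449550000*z + 1450831500*z^2 + 2685106800*z^3 + 3146674500*z^4 + 2424593160*z^5 + 1226513295*z^6 + 387698778*z^7 + 64127556*z^8 + 440406*z^9 + (-1762749)*z^10 + (-272412)*z^11 + (-14922)*z^12 + (-216)*z^13) :=
      mul_pos (pow_pos hz 4) hq2
    have hA : (0:ℝ) < 15 + 150*z + 441*z^2 + 508*z^3 + 218*z^4 + 24*z^5 := by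
      nlinarith [pow_pos hz 1, pow_pos hz 2, pow_pos hz 3, pow_pos hz 4, pow_pos hz 5]
    -- master identity
    have hid : 3*z^6 * ((3*(20+30*z+12*z^2+z^3) * (3*(10+12*z+3*z^2)))^2 *
          ((1+2*z)*(2*z*(15+30*z+11*z^2))*(3*(1+2*z)+(2*z-1)*u-u^2)
            - 3*(5+15*z+12*z^2+2*z^3)*((1+z)*u*((1+4*z)*u+6*(1+2*z)))))
        = (3*(20+30*z+12*z^2+z^3) * (z*(30+21*z+z^2) - 3*(10+12*z+3*z^2)*u))
            * (z^4*(60750000 + 449550000*z + 1451317500*z^2 + 2689659000*z^3 + 3165110100*z^4 + 2466634860*z^5 + 1285656255*z^6 + 440783046*z^7 + 94613481*z^8 + 11395080*z^9 + 578178*z^10))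
          + (3*(10+12*z+3*z^2) * (3*(20+30*z+12*z^2+z^3)*u - z*(60+60*z+11*z^2)))
            * (z^4*(60750000 + 449550000*z + 1450831500*z^2 + 2685106800*z^3 + 3146674500*z^4 + 2424593160*z^5 + 1226513295*z^6 + 387698778*z^7 + 64127556*z^8 + 440406*z^9 + (-1762749)*z^10 + (-272412)*z^11 + (-14922)*z^12 + (-216)*z^13))
          + (15 + 150*z + 441*z^2 + 508*z^3 + 218*z^4 + 24*z^5)
            * (3*(10+12*z+3*z^2) * (3*(20+30*z+12*z^2+z^3)*u - z*(60+60*z+11*z^2)))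
            * (3*(20+30*z+12*z^2+z^3) * (z*(30+21*z+z^2) - 3*(10+12*z+3*z^2)*u))
            * (3*z^6) := by
      ring
    have hsum : (3*(10+12*z+3*z^2) * (3*(20+30*z+12*z^2+z^3)*u - z*(60+60*z+11*z^2)))
        + (3*(20+30*z+12*z^2+z^3) * (z*(30+21*z+z^2) - 3*(10+12*z+3*z^2)*u)) = 3*z^6 := by
      ring
    have hP : 0 < (1+2*z)*(2*z*(15+30*z+11*z^2))*(3*(1+2*z)+(2*z-1)*u-u^2)
        - 3*(5+15*z+12*z^2+2*z^3)*((1+z)*u*((1+4*z)*u+6*(1+2*z))) := by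
      have hz6p : (0:ℝ) < 3*z^6 := by positivity
      have hdd : (0:ℝ) < (3*(20+30*z+12*z^2+z^3) * (3*(10+12*z+3*z^2)))^2 := by positivity
      have hPP : 0 < 3*z^6 * ((3*(20+30*z+12*z^2+z^3) * (3*(10+12*z+3*z^2)))^2 *
          ((1+2*z)*(2*z*(15+30*z+11*z^2))*(3*(1+2*z)+(2*z-1)*u-u^2)
            - 3*(5+15*z+12*z^2+2*z^3)*((1+z)*u*((1+4*z)*u+6*(1+2*z))))) := by
        rcases le_total (3*(10+12*z+3*z^2) * (3*(20+30*z+12*z^2+z^3)*u - z*(60+60*z+11*z^2)))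
          (3*(20+30*z+12*z^2+z^3) * (z*(30+21*z+z^2) - 3*(10+12*z+3*z^2)*u)) with hc | hc
        · have he2' : (3/2)*z^6 ≤ 3*(20+30*z+12*z^2+z^3) * (z*(30+21*z+z^2) - 3*(10+12*z+3*z^2)*u) := by
            linarith
          linarith [hid, mul_le_mul_of_nonneg_right he2' hQ1.le,
            mul_pos (mul_pos (by norm_num : (0:ℝ) < 3/2) (pow_pos hz 6)) hQ1,
            mul_nonneg he1 hQ2.le,
            mul_nonneg (mul_nonneg (mul_nonneg hA.le he1) he2) hz6p.le]
        · have he1' : (3/2)*z^6 ≤ 3*(10+12*z+3*z^2) * (3*(20+30*z+12*z^2+z^3)*u - z*(60+60*z+11*z^2)) := by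
            linarith
          linarith [hid, mul_le_mul_of_nonneg_right he1' hQ2.le,
            mul_pos (mul_pos (by norm_num : (0:ℝ) < 3/2) (pow_pos hz 6)) hQ2,
            mul_nonneg he2 hQ1.le,
            mul_nonneg (mul_nonneg (mul_nonneg hA.le he1) he2) hz6p.le]
      by_contra hcon
      push_neg at hcon
      have h0 : 3*z^6 * ((3*(20+30*z+12*z^2+z^3) * (3*(10+12*z+3*z^2)))^2 *
          ((1+2*z)*(2*z*(15+30*z+11*z^2))*(3*(1+2*z)+(2*z-1)*u-u^2)
            - 3*(5+15*z+12*z^2+2*z^3)*((1+z)*u*((1+4*z)*u+6*(1+2*z))))) ≤ 0 :=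
        mul_nonpos_of_nonneg_of_nonpos hz6p.le
          (mul_nonpos_of_nonneg_of_nonpos hdd.le hcon)
      linarith [hPP, h0]
    have hd1 : (0:ℝ) < 3*(5+15*z+12*z^2+2*z^3) := by
      nlinarith [pow_pos hz 1, pow_pos hz 2, pow_pos hz 3]
    by_contra hcon
    push_neg at hcon
    have hc1 : 3*(5+15*z+12*z^2+2*z^3) * ((1+2*z)*v*(3*(1+2*z)+(2*z-1)*u-u^2))
        ≤ 3*(5+15*z+12*z^2+2*z^3) * ((1+z)*u*((1+4*z)*u+6*(1+2*z))) :=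
      mul_le_mul_of_nonneg_left hcon hd1.le
    have hc2 : (0:ℝ) ≤ (1+2*z)*(3*(1+2*z)+(2*z-1)*u-u^2)
        * (3*(5+15*z+12*z^2+2*z^3)*v - 2*z*(15+30*z+11*z^2)) :=
      mul_nonneg (mul_nonneg hb.le hX) (by linarith)
    linarith [hP, hc1, hc2]
  · -- large case z > 6
    have husq : u^2 ≤ 13/20*z := usq_bound (by linarith)
    have hX : 0 < 3*(1+2*z)+(2*z-1)*u-u^2 := by
      nlinarith [mul_nonneg (by linarith : (0:ℝ) ≤ 2*z-1) hu0.le]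
    have hl2 : (0.6931:ℝ) < Real.log 2 := by
      have := Real.log_two_gt_d9
      linarith
    have h2a : Real.log (2*(1+z)/(1+2*z)) ≤ 2*(1+z)/(1+2*z) - 1 :=
      Real.log_le_sub_one_of_pos (by positivity)
    have hsplit : Real.log (2*(1+z)/(1+2*z)) = Real.log 2 + u - v := by
      rw [Real.log_div (by positivity) (by positivity), Real.log_mul (by norm_num) (by positivity)]
    have hbv : (1+2*z)*u + (1+2*z)*Real.log 2 - 1 ≤ (1+2*z)*v := by
      have h4 : Real.log 2 + u - v ≤ 2*(1+z)/(1+2*z) - 1 := by rw [← hsplit]; exact h2a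
      have h5 := mul_le_mul_of_nonneg_right h4 hb.le
      have h6 : (2*(1+z)/(1+2*z) - 1)*(1+2*z) = 1 := by field_simp; ring
      nlinarith [h5, h6]
    have hstep : ((1+2*z)*u + (1+2*z)*(6931/10000) - 1)*(3*(1+2*z)+(2*z-1)*u-u^2)
        < (1+2*z)*v*(3*(1+2*z)+(2*z-1)*u-u^2) := by
      apply mul_lt_mul_of_pos_right ?_ hX
      nlinarith [hl2, hbv, hb]
    have hmain : (1+z)*u*((1+4*z)*u+6*(1+2*z))
        ≤ ((1+2*z)*u + (1+2*z)*(6931/10000) - 1)*(3*(1+2*z)+(2*z-1)*u-u^2) := by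
      nlinarith [husq, hu0.le, hz6,
        mul_nonneg (sub_nonneg.2 husq) hu0.le,
        mul_nonneg (sub_nonneg.2 husq) (by linarith : (0:ℝ) ≤ z - 6),
        mul_nonneg (mul_nonneg (sub_nonneg.2 husq) hu0.le) (by linarith : (0:ℝ) ≤ z - 6),
        mul_nonneg (by linarith : (0:ℝ) ≤ z - 6) hu0.le,
        sq_nonneg (z - 6), sq_nonneg u, mul_pos hz hu0,
        mul_nonneg (sub_nonneg.2 husq) (sub_nonneg.2 husq)]
    linarith

private lemma dd_eq {z : ℝ} (hz : 0 < z) :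
    deriv (deriv (fun t : ℝ => Real.log (1+2*t) / Real.log (1+t))) z = phi2 z := by
  have h1 : Set.EqOn (deriv (fun t : ℝ => Real.log (1+2*t) / Real.log (1+t))) phi1 (Ioi 0) :=
    fun y hy => (d1 hy).deriv
  have h2 : deriv (fun t : ℝ => Real.log (1+2*t) / Real.log (1+t)) =ᶠ[nhds z] phi1 :=
    Filter.eventuallyEq_of_mem (Ioi_mem_nhds hz) h1
  rw [h2.deriv_eq]
  exact (d2 hz).deriv

private lemma Hfun_eq {z : ℝ} (hz : 0 < z) : (1+2*z)^2 * phi2 z = Hxp z := by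
  have h1 := hu_pos hz
  have ha : (0:ℝ) < 1+z := by linarith
  have hb : (0:ℝ) < 1+2*z := by linarith
  rw [phi2, Hxp]
  field_simp
  ring

private lemma derivH {z : ℝ} (hz : 0 < z) :
    HasDerivAt (fun t : ℝ => (1+2*t)^2 *
      deriv (deriv (fun s : ℝ => Real.log (1+2*s) / Real.log (1+s))) t) (Hd z) z := by
  have heq : Set.EqOn (fun t : ℝ => (1+2*t)^2 *
      deriv (deriv (fun s : ℝ => Real.log (1+2*s) / Real.log (1+s))) t) Hxp (Ioi 0) := by
    intro y hy
    simp only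
    rw [dd_eq hy, Hfun_eq hy]
  exact (dH hz).congr_of_eventuallyEq (Filter.eventuallyEq_of_mem (Ioi_mem_nhds hz) heq)

private lemma Hd_neg {z : ℝ} (hz : 0 < z) : Hd z < 0 := by
  have ha : (0:ℝ) < 1+z := by linarith
  rw [Hd]
  apply div_neg_of_neg_of_pos
  · linarith [key_ineq hz]
  · exact mul_pos (pow_pos ha 3) (pow_pos (hu_pos hz) 4)

/-- `H(z) = (1+2z)² Φ''(z)` is strictly decreasing on `(0, ∞)`; equivalently its
derivative is negative for every `z > 0`. Here `Φ(z) = ln(1+2z)/ln(1+z)`. -/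
theorem H_strictAnti :
    StrictAntiOn
      (fun z : ℝ => (1 + 2 * z) ^ 2 *
        deriv (deriv (fun z : ℝ => Real.log (1 + 2 * z) / Real.log (1 + z))) z)
      (Set.Ioi 0) ∧
    ∀ z : ℝ, 0 < z →
      deriv (fun z : ℝ => (1 + 2 * z) ^ 2 *
        deriv (deriv (fun z : ℝ => Real.log (1 + 2 * z) / Real.log (1 + z))) z) z < 0 := by
  constructor
  · apply strictAntiOn_of_deriv_neg (convex_Ioi 0)
    · intro x hx
      have hx' : (0:ℝ) < x := hx
      exact (derivH hx').differentiableAt.continuousAt.continuousWithinAt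
    · intro x hx
      rw [interior_Ioi] at hx
      rw [(derivH hx).deriv]
      exact Hd_neg hx
  · intro z hz
    rw [(derivH hz).deriv]
    exact Hd_neg hz
end

section
/- Let 0 < r ≤ 2 and v > 1. Then the derivative of z ↦ F(z; r, v) is strictly positive for every z > 0; consequently F(·; r, v) is strictly increasing on (0, ∞). -/
open Real Set

private lemma hasDerivAt_L (z : ℝ) (hz : 0 < 1 + z) :
    HasDerivAt (fun z : ℝ => Real.log (1 + z)) (1 / (1 + z)) z := by
  have h1 : HasDerivAt (fun z : ℝ => 1 + z) 1 z := (hasDerivAt_id z).const_add 1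
  simpa using h1.log (ne_of_gt hz)

private lemma hasDerivAt_M (z : ℝ) (hz : 0 < 1 + 2 * z) :
    HasDerivAt (fun z : ℝ => Real.log (1 + 2 * z)) (2 / (1 + 2 * z)) z := by
  have h1 : HasDerivAt (fun z : ℝ => 1 + 2 * z) 2 z := by
    simpa using ((hasDerivAt_id z).const_mul 2).const_add 1
  simpa using h1.log (ne_of_gt hz)

private lemma hasDerivAt_h (z : ℝ) (hz1 : 0 < 1 + z) (hz2 : 0 < 1 + 2 * z) :
    HasDerivAt (fun z : ℝ =>
      (Real.log (1 + z))^2 + 4 * Real.log (1 + z) - 2 * Real.log (1 + 2 * z))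
      (2 * Real.log (1 + z) * (1 / (1 + z)) + 4 * (1 / (1 + z)) - 2 * (2 / (1 + 2 * z))) z := by
  have hL := hasDerivAt_L z hz1
  have hM := hasDerivAt_M z hz2
  have := ((hL.pow 2).add (hL.const_mul 4)).sub (hM.const_mul 2)
  refine this.congr_deriv ?_
  ring

private lemma h_pos (z : ℝ) (hz : 0 < z) :
    0 < (Real.log (1 + z))^2 + 4 * Real.log (1 + z) - 2 * Real.log (1 + 2 * z) := by
  have hcont : ∀ x ∈ Ici (0:ℝ), ContinuousAt (fun z : ℝ =>
      (Real.log (1 + z))^2 + 4 * Real.log (1 + z) - 2 * Real.log (1 + 2 * z)) x := by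
    intro x hx
    have h1 : (0:ℝ) < 1 + x := by simp at hx; linarith
    have h2 : (0:ℝ) < 1 + 2 * x := by simp at hx; linarith
    exact (hasDerivAt_h x h1 h2).continuousAt
  have hmono : StrictMonoOn (fun z : ℝ =>
      (Real.log (1 + z))^2 + 4 * Real.log (1 + z) - 2 * Real.log (1 + 2 * z)) (Ici 0) := by
    apply strictMonoOn_of_deriv_pos (convex_Ici 0) (continuousOn_of_forall_continuousAt hcont)
    intro x hx
    rw [interior_Ici] at hx
    have hx0 : 0 < x := hx
    have h1 : (0:ℝ) < 1 + x := by linarith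
    have h2 : (0:ℝ) < 1 + 2 * x := by linarith
    rw [(hasDerivAt_h x h1 h2).deriv]
    have hL0 : 0 < Real.log (1 + x) := Real.log_pos (by linarith)
    have t1 : 0 < 2 * Real.log (1 + x) * (1 / (1 + x)) := by positivity
    have t2 : 2 * (2 / (1 + 2 * x)) < 4 * (1 / (1 + x)) := by
      rw [show (2:ℝ) * (2 / (1 + 2 * x)) = 4 / (1 + 2 * x) by ring,
          show (4:ℝ) * (1 / (1 + x)) = 4 / (1 + x) by ring,
          div_lt_div_iff₀ h2 h1]
      nlinarith
    linarith
  have := hmono (self_mem_Ici) (le_of_lt hz : (0:ℝ) ≤ z) hz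
  simpa using this

private lemma hasDerivAt_g (z : ℝ) (hz1 : 0 < 1 + z) (hz2 : 0 < 1 + 2 * z) :
    HasDerivAt (fun z : ℝ =>
      (1 + z) * Real.log (1 + z) * (Real.log (1 + z) + 2) - (1 + 2 * z) * Real.log (1 + 2 * z))
      ((Real.log (1 + z))^2 + 4 * Real.log (1 + z) - 2 * Real.log (1 + 2 * z)) z := by
  have hL := hasDerivAt_L z hz1
  have hM := hasDerivAt_M z hz2
  have h1 : HasDerivAt (fun z : ℝ => 1 + z) 1 z := (hasDerivAt_id z).const_add 1
  have h2 : HasDerivAt (fun z : ℝ => 1 + 2 * z) 2 z := by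
    simpa using ((hasDerivAt_id z).const_mul 2).const_add 1
  have hprod := ((h1.mul hL).mul (hL.add_const 2)).sub (h2.mul hM)
  refine hprod.congr_deriv ?_
  simp only [Pi.mul_apply]
  have e2 : (1 + 2 * z) * (2 / (1 + 2 * z)) = 2 := by
    rw [mul_div_assoc', mul_comm, mul_div_assoc, div_self hz2.ne', mul_one]
  rw [e2]
  field_simp
  ring

private lemma g_pos (z : ℝ) (hz : 0 < z) :
    0 < (1 + z) * Real.log (1 + z) * (Real.log (1 + z) + 2)
        - (1 + 2 * z) * Real.log (1 + 2 * z) := by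
  have hcont : ∀ x ∈ Ici (0:ℝ), ContinuousAt (fun z : ℝ =>
      (1 + z) * Real.log (1 + z) * (Real.log (1 + z) + 2)
        - (1 + 2 * z) * Real.log (1 + 2 * z)) x := by
    intro x hx
    have h1 : (0:ℝ) < 1 + x := by simp at hx; linarith
    have h2 : (0:ℝ) < 1 + 2 * x := by simp at hx; linarith
    exact (hasDerivAt_g x h1 h2).continuousAt
  have hmono : StrictMonoOn (fun z : ℝ =>
      (1 + z) * Real.log (1 + z) * (Real.log (1 + z) + 2)
        - (1 + 2 * z) * Real.log (1 + 2 * z)) (Ici 0) := by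
    apply strictMonoOn_of_deriv_pos (convex_Ici 0) (continuousOn_of_forall_continuousAt hcont)
    intro x hx
    rw [interior_Ici] at hx
    have h1 : (0:ℝ) < 1 + x := by linarith [hx.out]
    have h2 : (0:ℝ) < 1 + 2 * x := by linarith [hx.out]
    rw [(hasDerivAt_g x h1 h2).deriv]
    exact h_pos x hx
  have := hmono (self_mem_Ici) (le_of_lt hz : (0:ℝ) ≤ z) hz
  simpa using this

/-- For `0 < r ≤ 2` and `v > 1`, the derivative of `z ↦ F(z; r, v)` is strictly positive
for every `z > 0`; consequently `F(·; r, v)` is strictly increasing on `(0, ∞)`. -/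
theorem F_strictMono_of_r_le_two (r v : ℝ) (hr : 0 < r) (hr2 : r ≤ 2) (hv : 1 < v) :
    (∀ z : ℝ, 0 < z →
      0 < deriv (fun z : ℝ =>
        (r / Real.log (1 + z) + 1) * Real.log (1 + 2 * z) - 2 * r - Real.log v) z) ∧
    StrictMonoOn
      (fun z : ℝ =>
        (r / Real.log (1 + z) + 1) * Real.log (1 + 2 * z) - 2 * r - Real.log v)
      (Set.Ioi 0) := by
  have hF : ∀ z : ℝ, 0 < z → HasDerivAt (fun z : ℝ =>
      (r / Real.log (1 + z) + 1) * Real.log (1 + 2 * z) - 2 * r - Real.log v)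
      ((0 * Real.log (1 + z) - r * (1 / (1 + z))) / (Real.log (1 + z))^2 * Real.log (1 + 2 * z)
        + (r / Real.log (1 + z) + 1) * (2 / (1 + 2 * z))) z := by
    intro z hz
    have h1 : (0:ℝ) < 1 + z := by linarith
    have h2 : (0:ℝ) < 1 + 2 * z := by linarith
    have hL := hasDerivAt_L z h1
    have hM := hasDerivAt_M z h2
    have hL0 : Real.log (1 + z) ≠ 0 := ne_of_gt (Real.log_pos (by linarith))
    have hdiv := (hasDerivAt_const z r).div hL hL0
    exact ((((hdiv.add_const 1).mul hM).sub_const (2 * r)).sub_const (Real.log v))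
  have key : ∀ z : ℝ, 0 < z →
      0 < (0 * Real.log (1 + z) - r * (1 / (1 + z))) / (Real.log (1 + z))^2 * Real.log (1 + 2 * z)
        + (r / Real.log (1 + z) + 1) * (2 / (1 + 2 * z)) := by
    intro z hz
    have h1 : (0:ℝ) < 1 + z := by linarith
    have h2 : (0:ℝ) < 1 + 2 * z := by linarith
    have hL0 : 0 < Real.log (1 + z) := Real.log_pos (by linarith)
    set L := Real.log (1 + z) with hLdef
    set M := Real.log (1 + 2 * z) with hMdef
    have hg := g_pos z hz
    have hD : (0:ℝ) < (1 + z) * L^2 * (1 + 2 * z) := by positivity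
    have hnum : 0 < r * (2 * (1 + z) * L - (1 + 2 * z) * M) + 2 * (1 + z) * L^2 := by
      have hP : (0:ℝ) < (1 + z) * L^2 := by positivity
      nlinarith [mul_pos hr hg, mul_nonneg (by linarith : (0:ℝ) ≤ 2 - r) hP.le]
    have heq : (0 * L - r * (1 / (1 + z))) / L^2 * M + (r / L + 1) * (2 / (1 + 2 * z))
        = (r * (2 * (1 + z) * L - (1 + 2 * z) * M) + 2 * (1 + z) * L^2)
          / ((1 + z) * L^2 * (1 + 2 * z)) := by
      field_simp
      ring
    rw [heq]
    positivity
  constructor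
  · intro z hz
    rw [(hF z hz).deriv]
    exact key z hz
  · apply strictMonoOn_of_deriv_pos (convex_Ioi 0)
    · exact fun x hx => ((hF x hx).continuousAt).continuousWithinAt
    · intro x hx
      rw [interior_Ioi] at hx
      rw [(hF x hx).deriv]
      exact key x hx
end
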